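/- arXiv:1007.2159 — 9 statements merged into one kernel-verified Lean document; each statement's English description precedes it below -/
import Mathlib

section
/- Let p be a prime, G a finite group in which every normal p-subgroup is trivial, and N a normal subgroup of G such that the quotient G/N is a p-group. Then the Frattini subgroup of G equals the Frattini subgroup of N (viewed as subgroups of G). -/
/-!
Since `O_p(G) = 1` and `Φ(G)` is nilpotent, `Φ(G)` is a `p'`-group; hence it lies in `N` and its
order is prime to `|G : N|`. The inclusion `Φ(N) ≤ Φ(G)` holds for every normal subgroup `N`.

For `Φ(G) ≤ Φ(N)`, let `M` be maximal in `N` and factor out the core of `M` in `G`; then `M`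
contains no nontrivial normal subgroup of `G`, so `Φ(N) = 1`. If the image `Q` of `Φ(G)` were
nontrivial, its centre `A` would be a nontrivial abelian normal subgroup of `G` in `Φ(G) ∩ N`.
As `A ∩ Φ(N) = 1`, a minimal supplement of `A` in `N` is a complement (Gaschütz). A complement
is the kernel of a crossed homomorphism `N → A` retracting onto `A`; averaging it over coset
representatives of `N` and taking an `|G : N|`-th root (possible as `|A|` is prime to `|G : N|`)
gives a crossed retraction `G → A`, whose kernel complements `A` in `G`. But a subgroup of `Φ(G)`
with a complement is trivial.
-/

open scoped IsMulCommutative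

namespace Subgroup

variable {G : Type*} [Group G]

theorem isCoatom_iff_map_subtype_covBy {H : Subgroup G} {K : Subgroup H} :
    IsCoatom K ↔ K.map H.subtype ⋖ H :=
  (OrderIso.isCoatom_iff (β := Set.Iic H) (MapSubtype.orderIso H) K).symm.trans
    Set.Iic.isCoatom_iff

theorem le_map_subtype_frattini_iff {H X : Subgroup G} :
    X ≤ (frattini H).map H.subtype ↔ X ≤ H ∧ ∀ M, M ⋖ H → X ≤ M := by
  refine ⟨fun hX => ⟨hX.trans (map_subtype_le _), fun M hM => ?_⟩,
    fun ⟨hXH, hX⟩ x hx => ?_⟩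
  · have hM' : IsCoatom (M.subgroupOf H) := by
      rwa [isCoatom_iff_map_subtype_covBy, map_subgroupOf_eq_of_le hM.le]
    calc X ≤ (frattini H).map H.subtype := hX
      _ ≤ (M.subgroupOf H).map H.subtype := map_mono (frattini_le_coatom hM')
      _ = M := map_subgroupOf_eq_of_le hM.le
  · refine ⟨⟨x, hXH hx⟩, mem_iInf.mpr fun K => mem_iInf.mpr fun hK => ?_, rfl⟩
    obtain ⟨y, hy, rfl⟩ := hX _ (isCoatom_iff_map_subtype_covBy.mp hK) hx
    exact hy

theorem eq_of_le_of_sup_map_subtype_frattini_eq [Finite G] {H K : Subgroup G} (hKH : K ≤ H)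
    (h : K ⊔ (frattini H).map H.subtype = H) : K = H := by
  have htop : K.subgroupOf H ⊔ frattini H = ⊤ := by
    apply map_injective H.subtype_injective
    rw [map_sup, map_subgroupOf_eq_of_le hKH, h, ← MonoidHom.range_eq_map, range_subtype]
  rw [← map_subgroupOf_eq_of_le hKH, frattini_nongenerating htop, ← MonoidHom.range_eq_map,
    range_subtype]

theorem sup_inf_assoc_of_le (K : Subgroup G) {X H : Subgroup G} [X.Normal] (hXH : X ≤ H) :
    (X ⊔ K) ⊓ H = X ⊔ K ⊓ H := by
  refine le_antisymm (fun g hg => ?_)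
    (le_inf (sup_le_sup_left inf_le_left _) (sup_le hXH inf_le_right))
  obtain ⟨hgXK, hgH⟩ := mem_inf.mp hg
  obtain ⟨x, hx, k, hk, rfl⟩ := (Set.ext_iff.mp (normal_mul X K) g).mp hgXK
  have hkH : k ∈ H := by simpa using mul_mem (inv_mem (hXH hx)) hgH
  exact mul_mem (mem_sup_left hx) (mem_sup_right (mem_inf.mpr ⟨hk, hkH⟩))

theorem le_frattini_of_le_map_subtype_frattini [Finite G] {H X : Subgroup G} [X.Normal]
    (hX : X ≤ (frattini H).map H.subtype) : X ≤ frattini G := by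
  have hXH : X ≤ H := (le_map_subtype_frattini_iff.mp hX).1
  refine le_iInf fun K => le_iInf fun hK => by_contra fun hXK => hXK ?_
  have hXK' : X ⊔ K = ⊤ := hK.2 _ (right_lt_sup.mpr hXK)
  have hKH : K ⊓ H = H := by
    refine eq_of_le_of_sup_map_subtype_frattini_eq inf_le_right
      (le_antisymm (sup_le inf_le_right (map_subtype_le _)) ?_)
    calc H = (X ⊔ K) ⊓ H := by rw [hXK', top_inf_eq]
      _ = X ⊔ K ⊓ H := sup_inf_assoc_of_le K hXH
      _ ≤ K ⊓ H ⊔ (frattini H).map H.subtype := by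
        rw [sup_comm]
        exact sup_le_sup_left hX _
  exact hXH.trans (hKH ▸ inf_le_left)

structure IsCrossedRetraction (A S : Subgroup G) [A.Normal] (f : G → A) : Prop where
  map_mul : ∀ g ∈ S, ∀ h ∈ S, f (g * h) = f g * MulAut.conjNormal g (f h)
  map_coe : ∀ a : A, f a = a

section Averaging

variable (N : Subgroup G)

noncomputable def cosetCocycle (g : G) (ω : G ⧸ N) : G :=
  (g • ω).out⁻¹ * g * ω.out

theorem cosetCocycle_mem (g : G) (ω : G ⧸ N) : cosetCocycle N g ω ∈ N := by
  rw [cosetCocycle, mul_assoc, ← QuotientGroup.eq, ← smul_eq_mul,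
    ← MulAction.Quotient.smul_mk, QuotientGroup.out_eq', QuotientGroup.out_eq']

theorem cosetCocycle_mul (g h : G) (ω : G ⧸ N) :
    cosetCocycle N (g * h) ω = cosetCocycle N g (h • ω) * cosetCocycle N h ω := by
  simp only [cosetCocycle, mul_smul]
  group

theorem out_mul_cosetCocycle (g : G) (ω : G ⧸ N) :
    (g • ω).out * cosetCocycle N g ω = g * ω.out := by
  simp [cosetCocycle, mul_assoc]

theorem smul_eq_self_of_mem [N.Normal] {a : G} (ha : a ∈ N) (ω : G ⧸ N) : a • ω = ω := by
  induction ω using QuotientGroup.induction_on with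
  | H x =>
    rw [MulAction.Quotient.smul_mk, smul_eq_mul, QuotientGroup.eq]
    simpa [mul_assoc] using ‹N.Normal›.conj_mem _ (inv_mem ha) x⁻¹

variable {A : Subgroup G} [A.Normal] [IsMulCommutative A] [Fintype (G ⧸ N)]

noncomputable def cosetAverage (f : G → A) (g : G) : A :=
  ∏ ω : G ⧸ N, MulAut.conjNormal (g • ω).out (f (cosetCocycle N g ω))

theorem cosetAverage_mul {f : G → A} (hf : IsCrossedRetraction A N f) (g h : G) :
    cosetAverage N f (g * h) = cosetAverage N f g * MulAut.conjNormal g (cosetAverage N f h) := by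
  have hterm : ∀ ω : G ⧸ N,
      MulAut.conjNormal ((g * h) • ω).out (f (cosetCocycle N (g * h) ω))
        = MulAut.conjNormal (g • h • ω).out (f (cosetCocycle N g (h • ω)))
          * MulAut.conjNormal g (MulAut.conjNormal (h • ω).out (f (cosetCocycle N h ω))) := by
    intro ω
    rw [cosetCocycle_mul, hf.map_mul _ (cosetCocycle_mem ..) _ (cosetCocycle_mem ..), map_mul,
      mul_smul, ← MulAut.mul_apply, ← map_mul, out_mul_cosetCocycle, map_mul, MulAut.mul_apply]
  rw [cosetAverage, Finset.prod_congr rfl fun ω _ => hterm ω, Finset.prod_mul_distrib,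
    ← map_prod]
  congr 1
  exact Equiv.prod_comp (MulAction.toPerm h)
    fun ω => MulAut.conjNormal (g • ω).out (f (cosetCocycle N g ω))

theorem cosetAverage_coe [N.Normal] (hAN : A ≤ N) {f : G → A} (hf : IsCrossedRetraction A N f)
    (a : A) : cosetAverage N f a = a ^ N.index := by
  have hterm : ∀ ω : G ⧸ N,
      MulAut.conjNormal ((a : G) • ω).out (f (cosetCocycle N a ω)) = a := by
    intro ω
    have hmem : ω.out⁻¹ * a * ω.out ∈ A := by
      simpa using ‹A.Normal›.conj_mem _ a.2 ω.out⁻¹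
    have hu : cosetCocycle N a ω = ((⟨_, hmem⟩ : A) : G) := by
      simp [cosetCocycle, smul_eq_self_of_mem N (hAN a.2)]
    rw [hu, hf.map_coe, smul_eq_self_of_mem N (hAN a.2)]
    ext
    simp [MulAut.conjNormal_apply, mul_assoc]
  rw [cosetAverage, Finset.prod_congr rfl fun ω _ => hterm ω, Finset.prod_const, Finset.card_univ,
    index_eq_card, Nat.card_eq_fintype_card]

end Averaging

section Complements

variable {A : Subgroup G} [A.Normal] [IsMulCommutative A]

theorem conjNormal_coe_eq_self (a b : A) :
    MulAut.conjNormal (a : G) b = b := by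
  ext
  rw [MulAut.conjNormal_apply, ← coe_mul, mul_comm, coe_mul, mul_inv_cancel_right]

theorem exists_isCompl_of_isCrossedRetraction_top {f : G → A}
    (hf : IsCrossedRetraction A ⊤ f) : ∃ T, IsCompl A T := by
  have hf1 : f 1 = 1 := by simpa using hf.map_coe 1
  have hfinv : ∀ g, f g = 1 → f g⁻¹ = 1 := fun g hg => by
    simpa [hg, hf1] using (hf.map_mul g⁻¹ trivial g trivial).symm
  let T : Subgroup G :=
    { carrier := {g | f g = 1}
      one_mem' := hf1
      mul_mem' := fun {g h} (hg : f g = 1) (hh : f h = 1) => show f (g * h) = 1 by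
        rw [hf.map_mul g trivial h trivial, hg, hh, map_one, mul_one]
      inv_mem' := fun {g} => hfinv g }
  refine ⟨T, IsCompl.of_eq ?_ ?_⟩
  · refine eq_bot_iff.mpr fun a ha => ?_
    obtain ⟨haA, haT⟩ := mem_inf.mp ha
    have : (⟨a, haA⟩ : A) = 1 := (hf.map_coe ⟨a, haA⟩).symm.trans haT
    simpa using congrArg Subtype.val this
  · refine eq_top_iff.mpr fun g _ => ?_
    have hT : f ((f g : G)⁻¹ * g) = 1 := by
      rw [hf.map_mul _ trivial g trivial, ← coe_inv, hf.map_coe, conjNormal_coe_eq_self,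
        inv_mul_cancel]
    simpa using mul_mem (mem_sup_left (f g).2) (mem_sup_right (show _ ∈ T from hT))

theorem exists_isCrossedRetraction_of_sup_eq_of_inf_eq_bot
    {N C : Subgroup G} (hsup : A ⊔ C = N) (hinf : A ⊓ C = ⊥) :
    ∃ f : G → A, IsCrossedRetraction A N f := by
  have hex : ∀ g ∈ N, ∃ a : A, (a : G)⁻¹ * g ∈ C := fun g hg => by
    rw [← hsup, ← SetLike.mem_coe, normal_mul] at hg
    obtain ⟨a, ha, c, hc, rfl⟩ := hg
    exact ⟨⟨a, ha⟩, by simpa using hc⟩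
  have huniq : ∀ g (a b : A), (a : G)⁻¹ * g ∈ C → (b : G)⁻¹ * g ∈ C → a = b := by
    intro g a b ha hb
    have hab : (b : G)⁻¹ * a ∈ A ⊓ C :=
      mem_inf.mpr ⟨by simp [mul_mem], by simpa [mul_assoc] using mul_mem hb (inv_mem ha)⟩
    rw [hinf, mem_bot, inv_mul_eq_one] at hab
    exact (Subtype.ext hab).symm
  choose! f hf using hex
  refine ⟨f, fun g hg h hh => huniq (g * h) _ _ (hf _ (mul_mem hg hh)) ?_, fun a => ?_⟩
  · have hcomm : (f g : G)⁻¹ * (MulAut.conjNormal g (f h) : G)⁻¹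
        = (MulAut.conjNormal g (f h) : G)⁻¹ * (f g : G)⁻¹ := by
      simpa only [coe_mul, coe_inv] using
        congrArg Subtype.val (mul_comm (f g)⁻¹ (MulAut.conjNormal g (f h))⁻¹)
    have key : ((f g * MulAut.conjNormal g (f h) : A) : G)⁻¹ * (g * h)
        = ((f g : G)⁻¹ * g) * ((f h : G)⁻¹ * h) := by
      rw [coe_mul, mul_inv_rev, ← hcomm, MulAut.conjNormal_apply]
      group
    rw [key]
    exact mul_mem (hf g hg) (hf h hh)
  · exact huniq a _ _ (hf a ((le_sup_left.trans hsup.le) a.2)) (by simp [C.one_mem])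

theorem exists_isCrossedRetraction_top_of_coprime [Finite G] {N : Subgroup G}
    [N.Normal] (hAN : A ≤ N) {f : G → A} (hf : IsCrossedRetraction A N f)
    (hcop : (Nat.card A).Coprime N.index) : ∃ ψ : G → A, IsCrossedRetraction A ⊤ ψ := by
  have := Fintype.ofFinite (G ⧸ N)
  have hinj : Function.Injective fun a : A => a ^ N.index := (powCoprime hcop).injective
  obtain ⟨ψ, hψ⟩ : ∃ ψ : G → A, ∀ g, ψ g ^ N.index = cosetAverage N f g :=
    ⟨fun g => (powCoprime hcop).symm (cosetAverage N f g),
      fun g => (powCoprime hcop).apply_symm_apply _⟩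
  refine ⟨ψ, fun g _ h _ => hinj ?_, fun a => hinj ?_⟩
  · simp only [hψ, mul_pow, ← map_pow, cosetAverage_mul N hf]
  · simp only [hψ, cosetAverage_coe N hAN hf]

theorem exists_isCompl_of_sup_eq_of_coprime [Finite G] {N C : Subgroup G}
    [N.Normal] (hsup : A ⊔ C = N) (hinf : A ⊓ C = ⊥) (hcop : (Nat.card A).Coprime N.index) :
    ∃ T, IsCompl A T := by
  obtain ⟨f, hf⟩ := exists_isCrossedRetraction_of_sup_eq_of_inf_eq_bot hsup hinf
  obtain ⟨ψ, hψ⟩ := exists_isCrossedRetraction_top_of_coprime (hsup ▸ le_sup_left) hf hcop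
  exact exists_isCompl_of_isCrossedRetraction_top hψ

theorem normal_inf_of_sup_eq_top {H : Subgroup G} (h : A ⊔ H = ⊤) :
    (A ⊓ H).Normal := by
  rw [← normalizer_eq_top_iff, eq_top_iff, ← h]
  refine sup_le ?_ ?_
  · exact (le_centralizer_iff_isMulCommutative.mpr ‹_›).trans
      ((centralizer_le (SetLike.coe_subset_coe.mpr inf_le_left)).trans
        (centralizer_le_normalizer _))
  · exact (le_inf le_normalizer_of_normal le_normalizer).trans inf_normalizer_le_normalizer_inf

theorem exists_isCompl_of_inf_frattini_eq_bot [Finite G]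
    (h : A ⊓ frattini G = ⊥) : ∃ C, IsCompl A C := by
  obtain ⟨H, hH⟩ :=
    (Set.toFinite {H : Subgroup G | A ⊔ H = ⊤}).exists_minimal ⟨⊤, sup_top_eq _⟩
  have hAH : A ⊔ H = ⊤ := hH.prop
  have := normal_inf_of_sup_eq_top hAH
  have hΦ : A ⊓ H ≤ (frattini H).map H.subtype := by
    refine le_map_subtype_frattini_iff.mpr ⟨inf_le_right, fun M hM => by_contra fun hAM => ?_⟩
    have hHM : H ≤ M ⊔ A ⊓ H :=
      (eq_of_le_of_not_lt (sup_le hM.le inf_le_right) (hM.2 (left_lt_sup.mpr hAM))).ge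
    have hAM' : A ⊔ M = ⊤ := by
      rw [eq_top_iff, ← hAH]
      exact sup_le le_sup_left (hHM.trans (sup_le le_sup_right (inf_le_left.trans le_sup_left)))
    exact hM.lt.not_ge (hH.2 hAM' hM.le)
  exact ⟨H, IsCompl.of_eq (eq_bot_iff.mpr (h ▸ le_inf inf_le_left
    (le_frattini_of_le_map_subtype_frattini hΦ))) hAH⟩

theorem eq_bot_of_le_frattini_of_isMulCommutative [Finite G]
    {N : Subgroup G} [N.Normal] (hAN : A ≤ N) (hA : A ≤ frattini G) (hN : frattini N = ⊥)
    (hcop : (Nat.card A).Coprime N.index) : A = ⊥ := by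
  obtain ⟨C, hC⟩ := exists_isCompl_of_inf_frattini_eq_bot (A := A.subgroupOf N)
    (by rw [hN, inf_bot_eq])
  have hsup : A ⊔ C.map N.subtype = N := by
    rw [← map_subgroupOf_eq_of_le hAN, ← map_sup, hC.sup_eq_top, ← MonoidHom.range_eq_map,
      range_subtype]
  have hinf : A ⊓ C.map N.subtype = ⊥ := by
    rw [← map_subgroupOf_eq_of_le hAN, ← map_inf _ _ _ N.subtype_injective, hC.inf_eq_bot,
      map_bot]
  obtain ⟨T, hT⟩ := exists_isCompl_of_sup_eq_of_coprime hsup hinf hcop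
  have hTtop : T = ⊤ := frattini_nongenerating
    (eq_top_iff.mpr (hT.sup_eq_top ▸ sup_comm A T ▸ sup_le_sup_left hA T))
  simpa [hTtop] using hT.inf_eq_bot

end Complements

theorem eq_bot_of_le_frattini_of_frattini_eq_bot [Finite G] {N Q : Subgroup G} [N.Normal]
    [Q.Normal] (hQN : Q ≤ N) (hQ : Q ≤ frattini G) (hN : frattini N = ⊥)
    (hcop : (Nat.card Q).Coprime N.index) : Q = ⊥ := by
  by_contra hQne
  have : Nontrivial Q := (nontrivial_iff_ne_bot Q).mpr hQne
  have : Group.IsNilpotent (frattini G) := frattini_nilpotent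
  have : Group.IsNilpotent Q := Group.nilpotent_of_mulEquiv (subgroupOfEquivOfLe hQ)
  refine Group.IsNilpotent.center_ne_bot Q
    ((map_eq_bot_iff_of_injective _ Q.subtype_injective).mp ?_)
  exact eq_bot_of_le_frattini_of_isMulCommutative ((map_subtype_le _).trans hQN)
    ((map_subtype_le _).trans hQ) hN
    (hcop.coprime_dvd_left (card_dvd_of_le (map_subtype_le _)))

theorem frattini_eq_bot_of_covBy_of_normalCore_eq_bot {N M : Subgroup G} [N.Normal]
    (hM : M ⋖ N) (hcore : M.normalCore = ⊥) : frattini N = ⊥ := by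
  have h : (frattini N).map N.subtype ≤ M.normalCore :=
    normal_le_normalCore.mpr ((le_map_subtype_frattini_iff.mp le_rfl).2 M hM)
  rwa [hcore, le_bot_iff, map_eq_bot_iff_of_injective _ N.subtype_injective] at h

theorem map_covBy_map_of_ker_le {H : Type*} [Group H] {f : G →* H}
    (hf : Function.Surjective f) {M N : Subgroup G} (hM : M ⋖ N) (hker : f.ker ≤ M) :
    M.map f ⋖ N.map f := by
  have hMc : (M.map f).comap f = M := comap_map_eq_self hker
  have hNc : (N.map f).comap f = N := comap_map_eq_self (hker.trans hM.le)
  refine ⟨?_, fun X h1 h2 => hM.2 (c := X.comap f) ?_ ?_⟩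
  · rw [← comap_lt_comap_of_surjective hf, hMc, hNc]
    exact hM.lt
  · rw [← hMc]
    exact (comap_lt_comap_of_surjective hf).mpr h1
  · rw [← hNc]
    exact (comap_lt_comap_of_surjective hf).mpr h2

theorem normalCore_map_mk'_normalCore (M : Subgroup G) :
    (M.map (QuotientGroup.mk' M.normalCore)).normalCore = ⊥ := by
  set π := QuotientGroup.mk' M.normalCore
  have hker : π.ker = M.normalCore := QuotientGroup.ker_mk' _
  have h : (M.map π).normalCore.comap π ≤ M.normalCore :=
    normal_le_normalCore.mpr ((comap_mono (normalCore_le _)).trans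
      (comap_map_eq_self (hker.le.trans (normalCore_le M))).le)
  rw [← map_comap_eq_self_of_surjective (QuotientGroup.mk'_surjective _) (normalCore _),
    map_eq_bot_iff, hker]
  exact h

theorem le_of_covBy_of_le_frattini [Finite G] {N Q M : Subgroup G} [N.Normal] [Q.Normal]
    (hQN : Q ≤ N) (hQ : Q ≤ frattini G) (hcop : (Nat.card Q).Coprime N.index) (hM : M ⋖ N) :
    Q ≤ M := by
  set π := QuotientGroup.mk' M.normalCore
  have hπ : Function.Surjective π := QuotientGroup.mk'_surjective _
  have hker : π.ker = M.normalCore := QuotientGroup.ker_mk' _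
  have : (N.map π).Normal := Normal.map ‹_› π hπ
  have : (Q.map π).Normal := Normal.map ‹_› π hπ
  have hQπ : Q.map π = ⊥ := eq_bot_of_le_frattini_of_frattini_eq_bot (map_mono hQN)
    (map_le_iff_le_comap.mpr (hQ.trans (frattini_le_comap_frattini_of_surjective hπ)))
    (frattini_eq_bot_of_covBy_of_normalCore_eq_bot
      (map_covBy_map_of_ker_le hπ hM (hker.le.trans (normalCore_le M)))
      (normalCore_map_mk'_normalCore M))
    ((hcop.coprime_dvd_left (card_map_dvd _ _)).coprime_dvd_right (index_map_dvd _ hπ))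
  rw [map_eq_bot_iff, hker] at hQπ
  exact hQπ.trans (normalCore_le M)

theorem le_of_coprime_card_index {N Q : Subgroup G} [N.Normal]
    (hcop : (Nat.card Q).Coprime N.index) : Q ≤ N := by
  have h := Nat.eq_one_of_dvd_coprimes hcop (card_map_dvd Q (QuotientGroup.mk' N))
    (card_subgroup_dvd_card _)
  rwa [card_eq_one, map_eq_bot_iff, QuotientGroup.ker_mk'] at h

theorem le_map_subtype_frattini_of_coprime [Finite G] {N Q : Subgroup G} [N.Normal] [Q.Normal]
    (hQ : Q ≤ frattini G) (hcop : (Nat.card Q).Coprime N.index) :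
    Q ≤ (frattini N).map N.subtype :=
  have hQN := le_of_coprime_card_index hcop
  le_map_subtype_frattini_iff.mpr ⟨hQN, fun _ hM => le_of_covBy_of_le_frattini hQN hQ hcop hM⟩

theorem coprime_card_of_forall_normal_pGroup_eq_bot [Finite G] {p : ℕ} [Fact p.Prime]
    (K : Subgroup G) [K.Normal] [Group.IsNilpotent K]
    (hOp : ∀ P : Subgroup G, P.Normal → IsPGroup p P → P = ⊥) : (Nat.card K).Coprime p := by
  obtain ⟨P⟩ : Nonempty (Sylow p K) := inferInstance
  have := Sylow.characteristic_of_normal P inferInstance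
  have hP : (P : Subgroup K).map K.subtype = ⊥ := hOp _ inferInstance (P.2.map _)
  refine Nat.Coprime.symm ((Nat.Prime.coprime_iff_not_dvd Fact.out).mpr fun hdvd =>
    P.ne_bot_of_dvd_card hdvd ?_)
  exact (map_eq_bot_iff_of_injective _ K.subtype_injective).mp hP

end Subgroup

open Subgroup

/-- Let `p` be a prime, `G` a finite group in which every normal `p`-subgroup
is trivial, and `N` a normal subgroup of `G` such that `G/N` is a `p`-group.  Then the Frattini
subgroup of `G` equals the Frattini subgroup of `N`, viewed as a subgroup of `G`. -/
theorem frattini_eq_frattini_of_pGroup_quotient {p : ℕ} (hp : p.Prime)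
    {G : Type*} [Group G] [Finite G]
    (hOp : ∀ P : Subgroup G, P.Normal → IsPGroup p P → P = ⊥)
    (N : Subgroup G) (hN : N.Normal) (hquot : IsPGroup p (G ⧸ N)) :
    frattini G = Subgroup.map N.subtype (frattini N) := by
  have : Fact p.Prime := ⟨hp⟩
  have : Group.IsNilpotent (frattini G) := frattini_nilpotent
  obtain ⟨k, hk⟩ := hquot.exists_card_eq
  have hcop : (Nat.card (frattini G)).Coprime N.index := by
    rw [index, hk]
    exact (coprime_card_of_forall_normal_pGroup_eq_bot _ hOp).pow_right k
  exact le_antisymm (le_map_subtype_frattini_of_coprime le_rfl hcop)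
    (le_frattini_of_le_map_subtype_frattini le_rfl)
end

section
/- Let G be a finite group, S a Sylow 2-subgroup of G, and T a subgroup of S such that: (i) T is elementary abelian of index 2 in S; (ii) |C_T(S)|^2 = |T|. Then either |T| = 4, or T is strongly closed in S with respect to G, i.e. for every x ∈ T and every g ∈ G with gxg^{-1} ∈ S one has gxg^{-1} ∈ T. -/
/-- A subgroup is *elementary abelian* for the prime `p` if it is commutative and every
element `x` satisfies `x ^ p = 1`. -/
def IsElementaryAbelian (p : ℕ) {G : Type*} [Group G] (A : Subgroup G) : Prop :=
  (∀ a b : A, a * b = b * a) ∧ ∀ a : A, a ^ p = 1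

/-!
Write `Z = C_T(S)`. Since `T` is abelian of index two in `S`, every `s ∈ S \ T` has `C_T(s) = Z`,
so `|C_S(s)| = 2|Z|`; squares and commutators of elements of `S` lie in `Z`; and `t ↦ ⁅t, s⁆` maps
`T` onto `Z`, its kernel being `Z` and `|T| = |Z|²`. When `|Z| > 2`, an abelian subgroup of `S` of
order `|T| > 2|Z|` centralizes no element of `S \ T`, so it lies in `T`.

Suppose `y = g x g⁻¹ ∈ S \ T` with `x ∈ T`. A `2`-subgroup `P` of `C_G(y)` containing `C_S(y)` has
order at least `|g T g⁻¹| = |T|`; it lies in a conjugate `S₁ = c S c⁻¹`, and `T₁ = c T c⁻¹`. As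
`|C_{S₁}(y)| < |T|`, `y ∈ T₁`. If `Z ≤ T₁`, then `C_S(y) ≤ T₁`, so `T₁` normalizes `C_S(y)`, and a
conjugate of `T₁` by an element of `N_G(C_S(y))` lies in `S`, hence in `T`, and contains `y`.
Otherwise some `ζ ∈ Z \ T₁` gives `C_S(y) = C_{S₁}(ζ)`, which contains `Z` and `Z₁ = C_{T₁}(S₁)`;
these meet in some `a ≠ 1`. With `u ∈ T`, `w ∈ T₁`, `⁅u, y⁆ = a` and `⁅w, ζ⁆ = y`, the square of
`k = u w ∈ N_G(C_S(y))` conjugates `ζ` to `a ζ`, and so does the square of the `2`-part of `k`. But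
a `2`-element of `N_G(C_S(y))` is conjugate into `S` there, and squares of `S` centralize `C_S(y)`.
-/

open Subgroup
open scoped Pointwise commutatorElement

section

variable {G : Type*} [Group G]

theorem Subgroup.card_mul_relIndex {H K : Subgroup G} (h : H ≤ K) :
    Nat.card H * H.relIndex K = Nat.card K := by
  simpa [relIndex_bot_left] using relIndex_mul_relIndex ⊥ H K bot_le h

theorem Subgroup.exists_ne_one_mem_inf_of_card_lt [Finite G] {H K L : Subgroup G} (hH : H ≤ L)
    (hK : K ≤ L) (hcard : Nat.card L < Nat.card H * Nat.card K) : ∃ a ∈ H ⊓ K, a ≠ 1 := by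
  by_contra! hHK
  have hbot : K ⊓ H = ⊥ := (eq_bot_iff_forall _).2 fun a ha ↦ hHK a ⟨ha.2, ha.1⟩
  have hL := card_mul_relIndex hK
  have hKL : K.relIndex L ≠ 0 := by rintro h0; rw [h0] at hL; exact Nat.card_pos.ne' hL.symm
  have hle : Nat.card H ≤ K.relIndex L := by
    simpa [← inf_relIndex_right K H, hbot, relIndex_bot_left] using relIndex_le_of_le_right hH hKL
  nlinarith [Nat.mul_le_mul_left (Nat.card K) hle]

theorem Subgroup.card_pointwise_smul {α : Type*} [Group α] [MulDistribMulAction α G] (a : α)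
    (H : Subgroup G) : Nat.card (a • H : Subgroup G) = Nat.card H :=
  Nat.card_congr (equivSMul a H).toEquiv.symm

theorem Subgroup.centralizer_pointwise_smul (a : MulAut G) (H : Subgroup G) :
    centralizer ((a • H : Subgroup G) : Set G) = a • centralizer H := by
  ext x
  simp only [mem_centralizer_iff, mem_pointwise_smul_iff_inv_smul_mem, SetLike.mem_coe]
  constructor
  · intro hx y hy
    simpa [MulAut.smul_def] using congrArg a.symm (hx (a • y) (by simpa using hy))
  · intro hx y hy
    simpa [MulAut.smul_def] using congrArg a (hx _ hy)

theorem exists_conj_smul_le_sylow [Finite G] {p : ℕ} [Fact p.Prime] (P : Sylow p G)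
    {N K : Subgroup G} (hPN : (P : Subgroup G) ≤ N) (hKN : K ≤ N) (hK : IsPGroup p K) :
    ∃ n ∈ N, MulAut.conj n • K ≤ P := by
  obtain ⟨Q, hQ⟩ := (hK.comap_subtype (K := N)).exists_le_sylow
  obtain ⟨ν, hν⟩ := MulAction.exists_smul_eq N Q (P.subtype hPN)
  refine ⟨ν, ν.2, ?_⟩
  rintro _ ⟨k, hk, rfl⟩
  have : MulAut.conj ν • (⟨k, hKN hk⟩ : N) ∈ ((ν • Q : Sylow p N) : Subgroup N) :=
    smul_mem_pointwise_smul _ _ _ (hQ hk)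
  rw [hν, Sylow.coe_subtype, mem_subgroupOf] at this
  exact this

theorem IsPGroup.exists_isPGroup_between_card_le [Finite G] {p : ℕ} [Fact p.Prime]
    {H K L : Subgroup G} (hK : IsPGroup p K) (hL : IsPGroup p L) (hKH : K ≤ H) (hLH : L ≤ H) :
    ∃ P : Subgroup G, IsPGroup p P ∧ K ≤ P ∧ P ≤ H ∧ Nat.card L ≤ Nat.card P := by
  obtain ⟨Q, hQ⟩ := (hK.comap_subtype (K := H)).exists_le_sylow
  obtain ⟨R, hR⟩ := (hL.comap_subtype (K := H)).exists_le_sylow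
  refine ⟨Q.map H.subtype, Q.isPGroup'.map _, fun k hk ↦ ⟨⟨k, hKH hk⟩, hQ hk, rfl⟩,
    map_subtype_le _, ?_⟩
  calc Nat.card L = Nat.card (L.subgroupOf H) :=
        (Nat.card_congr (subgroupOfEquivOfLe hLH).toEquiv).symm
    _ ≤ Nat.card R := card_le_of_le hR
    _ = Nat.card Q := by rw [Sylow.card_eq_multiplicity, Sylow.card_eq_multiplicity]
    _ = Nat.card (Q.map H.subtype) := (card_map_of_injective H.subtype_injective).symm

theorem exists_odd_isPGroup_zpowers_pow [Finite G] (k : G) :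
    ∃ m, Odd m ∧ IsPGroup 2 (zpowers (k ^ m)) := by
  obtain ⟨e, m, hm, hk⟩ := Nat.exists_eq_two_pow_mul_odd (orderOf_pos k).ne'
  refine ⟨m, hm, IsPGroup.of_card (n := e) ?_⟩
  rw [Nat.card_zpowers, orderOf_pow_of_dvd hm.pos.ne' (hk ▸ dvd_mul_left _ _), hk,
    Nat.mul_div_cancel _ hm.pos]

theorem MulAut.conj_pow_apply_eq_pow_mul {c a ζ : G} (hca : MulAut.conj c a = a)
    (hcζ : MulAut.conj c ζ = a * ζ) (n : ℕ) : MulAut.conj (c ^ n) ζ = a ^ n * ζ := by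
  induction n with
  | zero => simp
  | succ n ih =>
    rw [pow_succ', map_mul, MulAut.mul_apply, ih, map_mul, map_pow, hca, hcζ, pow_succ, mul_assoc]

theorem MulAut.conj_mul_sq_apply {u w y ζ a : G} (hu : ⁅u, y⁆ = a) (hw : ⁅w, ζ⁆ = y)
    (huζ : Commute u ζ) (hwy : Commute w y) (hua : Commute u a) (hwa : Commute w a)
    (hay : Commute a y) (ha : a ^ 2 = 1) (hy : y ^ 2 = 1) :
    MulAut.conj ((u * w) ^ 2) ζ = a * ζ := by
  have hka : MulAut.conj (u * w) a = a := (hua.mul_left hwa).mul_inv_cancel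
  have hky : MulAut.conj (u * w) y = a * y := by
    rw [map_mul, MulAut.mul_apply, MulAut.conj_apply w, hwy.mul_inv_cancel,
      conj_eq_commutatorElement_mul, hu]
  have hkζ : MulAut.conj (u * w) ζ = a * y * ζ := by
    rw [map_mul, MulAut.mul_apply, conj_eq_commutatorElement_mul (g₁ := w), hw, map_mul,
      conj_eq_commutatorElement_mul (g₁ := u), hu, MulAut.conj_apply u ζ, huζ.mul_inv_cancel]
  rw [sq] at ha hy
  rw [map_pow, sq, MulAut.mul_apply, hkζ, map_mul, map_mul, hka, hky, hkζ,
    show a * (a * y) * (a * y * ζ) = a * a * (y * a) * y * ζ by group, ← hay.eq, ha,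
    show 1 * (a * y) * y * ζ = a * (y * y) * ζ by group, hy, mul_one]

def IsStronglyClosed (T S : Subgroup G) : Prop :=
  ∀ x ∈ T, ∀ g : G, g * x * g⁻¹ ∈ S → g * x * g⁻¹ ∈ T

structure IsElemAbOfIndexTwo (T S : Subgroup G) : Prop where
  le : T ≤ S
  le_centralizer : T ≤ centralizer T
  sq_eq_one : ∀ t ∈ T, t ^ 2 = 1
  relIndex_eq_two : T.relIndex S = 2

namespace IsElemAbOfIndexTwo

variable {S T : Subgroup G}

theorem commute (h : IsElemAbOfIndexTwo T S) {t t' : G} (ht : t ∈ T) (ht' : t' ∈ T) :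
    Commute t t' :=
  mem_centralizer_iff.1 (h.le_centralizer ht') t ht

theorem inv_eq_self (h : IsElemAbOfIndexTwo T S) {t : G} (ht : t ∈ T) : t⁻¹ = t :=
  inv_eq_of_mul_eq_one_right (by rw [← sq, h.sq_eq_one t ht])

theorem mul_mem_iff (h : IsElemAbOfIndexTwo T S) {a b : G} (ha : a ∈ S) (hb : b ∈ S) :
    a * b ∈ T ↔ (a ∈ T ↔ b ∈ T) := by
  simpa [mem_subgroupOf] using
    mul_mem_iff_of_index_two h.relIndex_eq_two (a := ⟨a, ha⟩) (b := ⟨b, hb⟩)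

theorem inv_mul_mem (h : IsElemAbOfIndexTwo T S) {a b : G} (ha : a ∈ S) (haT : a ∉ T)
    (hb : b ∈ S) (hbT : b ∉ T) : a⁻¹ * b ∈ T :=
  (h.mul_mem_iff (inv_mem ha) hb).2 (by simp [haT, hbT])

theorem inf_centralizer_singleton (h : IsElemAbOfIndexTwo T S) {s : G} (hs : s ∈ S)
    (hsT : s ∉ T) : T ⊓ centralizer {s} = T ⊓ centralizer S := by
  refine le_antisymm (fun t ⟨ht, hts⟩ ↦ ⟨ht, fun σ hσ ↦ ?_⟩)
    (inf_le_inf_left _ (centralizer_le (Set.singleton_subset_iff.2 hs)))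
  have hts : Commute s t := (mem_centralizer_singleton_iff.1 hts).symm
  by_cases hσT : σ ∈ T
  · exact h.commute hσT ht
  · simpa using (hts.mul_left (h.commute (h.inv_mul_mem hs hsT hσ hσT) ht)).eq

theorem sq_mem (h : IsElemAbOfIndexTwo T S) {s : G} (hs : s ∈ S) :
    s ^ 2 ∈ T ⊓ centralizer S := by
  by_cases hsT : s ∈ T
  · rw [h.sq_eq_one s hsT]; exact one_mem _
  · rw [← h.inf_centralizer_singleton hs hsT]
    refine ⟨?_, mem_centralizer_singleton_iff.2 (Commute.self_pow s 2).symm.eq⟩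
    rw [sq]; exact (h.mul_mem_iff hs hs).2 Iff.rfl

theorem commutatorElement_mem (h : IsElemAbOfIndexTwo T S) {σ τ : G} (hσ : σ ∈ S)
    (hτ : τ ∈ S) : ⁅σ, τ⁆ ∈ T ⊓ centralizer S := by
  have of_left_mem : ∀ t ∈ T, ∀ s ∈ S, ⁅t, s⁆ ∈ T ⊓ centralizer S := fun t ht s hs ↦ by
    have : ⁅t, s⁆ = (t * s) ^ 2 * (s ^ 2)⁻¹ := by
      rw [commutatorElement_def, h.inv_eq_self ht, sq, sq]; group
    rw [this]
    exact mul_mem (h.sq_mem (mul_mem (h.le ht) hs)) (inv_mem (h.sq_mem hs))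
  by_cases hσT : σ ∈ T
  · exact of_left_mem σ hσT τ hτ
  by_cases hτT : τ ∈ T
  · rw [← commutatorElement_inv]; exact inv_mem (of_left_mem τ hτT σ hσ)
  have : ⁅σ, τ⁆ = ⁅σ * τ⁻¹, τ⁆ := by simp only [commutatorElement_def]; group
  rw [this]
  exact of_left_mem _ ((h.mul_mem_iff hσ (inv_mem hτ)).2 (by simp [hσT, hτT])) τ hτ

theorem le_normalizer (h : IsElemAbOfIndexTwo T S) {D : Subgroup G}
    (hZD : T ⊓ centralizer S ≤ D) (hDS : D ≤ S) : S ≤ normalizer D := by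
  have conj_mem : ∀ σ ∈ S, ∀ d ∈ D, σ * d * σ⁻¹ ∈ D := fun σ hσ d hd ↦ by
    rw [← MulAut.conj_apply, conj_eq_commutatorElement_mul]
    exact mul_mem (hZD (h.commutatorElement_mem hσ (hDS hd))) hd
  refine fun σ hσ ↦ mem_normalizer_iff.2 fun d ↦ ⟨conj_mem σ hσ d, fun hd ↦ ?_⟩
  simpa [mul_assoc] using conj_mem σ⁻¹ (inv_mem hσ) _ hd

theorem inf_centralizer_le_inf_centralizer_singleton (h : IsElemAbOfIndexTwo T S) {s : G}
    (hs : s ∈ S) : T ⊓ centralizer S ≤ S ⊓ centralizer {s} :=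
  inf_le_inf h.le (centralizer_le (Set.singleton_subset_iff.2 hs))

theorem le_normalizer_inf_centralizer_singleton (h : IsElemAbOfIndexTwo T S) {s : G}
    (hs : s ∈ S) : S ≤ normalizer (S ⊓ centralizer {s} : Subgroup G) :=
  h.le_normalizer (h.inf_centralizer_le_inf_centralizer_singleton hs) inf_le_left

theorem card_inf_centralizer_singleton (h : IsElemAbOfIndexTwo T S) {s : G} (hs : s ∈ S)
    (hsT : s ∉ T) :
    Nat.card ↥(S ⊓ centralizer {s}) = 2 * Nat.card ↥(T ⊓ centralizer S) := by
  set D := S ⊓ centralizer {s}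
  have hTD : T ⊓ D = T ⊓ centralizer S := by
    rw [← inf_assoc, inf_of_le_left h.le, h.inf_centralizer_singleton hs hsT]
  have hS0 : T.relIndex S ≠ 0 := by rw [h.relIndex_eq_two]; norm_num
  have hle : T.relIndex D ≤ 2 := h.relIndex_eq_two ▸ relIndex_le_of_le_right inf_le_left hS0
  have hne1 : T.relIndex D ≠ 1 := fun h1 ↦
    hsT (relIndex_eq_one.1 h1 ⟨hs, mem_centralizer_singleton_iff.2 rfl⟩)
  have hne0 : T.relIndex D ≠ 0 := fun h0 ↦ hS0 (relIndex_eq_zero_of_le_right inf_le_left h0)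
  have h2 : T.relIndex D = 2 := by omega
  rw [← card_mul_relIndex (inf_le_right : T ⊓ D ≤ D), inf_relIndex_right, h2, hTD, mul_comm]

theorem inf_centralizer_singleton_le (h : IsElemAbOfIndexTwo T S) {s : G} (hs : s ∈ S)
    (hsT : s ∉ T) {K : Subgroup G} (hZK : T ⊓ centralizer S ≤ K) (hsK : s ∈ K) :
    S ⊓ centralizer {s} ≤ K := by
  rintro c ⟨hc, hcs⟩
  rw [← h.inf_centralizer_singleton hs hsT] at hZK
  by_cases hcT : c ∈ T
  · exact hZK ⟨hcT, hcs⟩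
  · have hcsT : c * s⁻¹ ∈ T := (h.mul_mem_iff hc (inv_mem hs)).2 (by simp [hcT, hsT])
    have hcs : Commute c s := mem_centralizer_singleton_iff.1 hcs
    have := hZK ⟨hcsT, mem_centralizer_singleton_iff.2 (hcs.mul_left (Commute.refl s).inv_left)⟩
    simpa using mul_mem this hsK

theorem exists_commutatorElement_eq [Finite G] (h : IsElemAbOfIndexTwo T S)
    (hcard : Nat.card ↥(T ⊓ centralizer S) ^ 2 = Nat.card T) {s : G} (hs : s ∈ S)
    (hsT : s ∉ T) {a : G} (ha : a ∈ T ⊓ centralizer S) : ∃ t ∈ T, ⁅t, s⁆ = a := by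
  set Z := T ⊓ centralizer (S : Set G)
  have hZ : ∀ t ∈ T, ⁅t, s⁆ ∈ Z := fun t ht ↦ h.commutatorElement_mem (h.le ht) hs
  let f : T →* G := MonoidHom.mk' (fun t ↦ ⁅(t : G), s⁆) fun t t' ↦ by
    simp only [coe_mul, commutatorElement_mul_left_eq_conj_mul,
      (h.commute t.2 (hZ t' t'.2).1).mul_inv_cancel]
    exact (h.commute (hZ t' t'.2).1 (hZ t t.2).1).eq
  have hrange : f.range ≤ Z := by rintro _ ⟨t, rfl⟩; exact hZ t t.2
  have hker : f.ker = Z.subgroupOf T := by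
    ext t
    rw [MonoidHom.mem_ker, mem_subgroupOf, show Z = T ⊓ centralizer {s} from
      (h.inf_centralizer_singleton hs hsT).symm]
    simp [f, commutatorElement_eq_one_iff_mul_comm, mem_centralizer_singleton_iff, eq_comm]
  have hcard_ker : Nat.card f.ker = Nat.card Z := by
    rw [hker]; exact Nat.card_congr (subgroupOfEquivOfLe inf_le_left).toEquiv
  have hcard_range : Nat.card f.ker * Nat.card f.range = Nat.card T := by
    rw [← index_ker, card_mul_index]
  rw [hcard_ker, ← hcard, sq] at hcard_range
  have := Nat.eq_of_mul_eq_mul_left Nat.card_pos hcard_range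
  obtain ⟨t, rfl⟩ := (eq_of_le_of_card_ge hrange this.ge).symm ▸ ha
  exact ⟨t, t.2, rfl⟩

theorem le_of_card_lt [Finite G] (h : IsElemAbOfIndexTwo T S) {K : Subgroup G} (hKS : K ≤ S)
    (hK : K ≤ centralizer K) (hcard : 2 * Nat.card ↥(T ⊓ centralizer S) < Nat.card K) :
    K ≤ T := by
  intro α hα
  by_contra hαT
  have hKD : K ≤ S ⊓ centralizer {α} := fun k hk ↦
    ⟨hKS hk, mem_centralizer_singleton_iff.2 (mem_centralizer_iff.1 (hK hα) k hk)⟩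
  have := card_le_of_le hKD
  rw [h.card_inf_centralizer_singleton (hKS hα) hαT] at this
  omega

theorem smul (h : IsElemAbOfIndexTwo T S) (a : MulAut G) :
    IsElemAbOfIndexTwo (a • T) (a • S) where
  le := pointwise_smul_le_pointwise_smul_iff.2 h.le
  le_centralizer := by
    rw [centralizer_pointwise_smul]; exact pointwise_smul_le_pointwise_smul_iff.2 h.le_centralizer
  sq_eq_one t ht := by
    rw [mem_pointwise_smul_iff_inv_smul_mem] at ht
    simpa [MulAut.smul_def] using congrArg a (h.sq_eq_one _ ht)
  relIndex_eq_two := (relIndex_pointwise_smul a T S).trans h.relIndex_eq_two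

theorem card_smul_inf_centralizer (a : MulAut G) :
    Nat.card ↥(a • T ⊓ centralizer ((a • S : Subgroup G) : Set G)) =
      Nat.card ↥(T ⊓ centralizer S) := by
  rw [centralizer_pointwise_smul, ← smul_inf, card_pointwise_smul]

theorem commute_sq_of_mem_normalizer [Finite G] (S : Sylow 2 G) (h : IsElemAbOfIndexTwo T S)
    {D : Subgroup G} (hDS : D ≤ S) (hSD : (S : Subgroup G) ≤ normalizer (D : Set G)) {σ : G}
    (hσ : σ ∈ normalizer (D : Set G)) (hσ2 : IsPGroup 2 (zpowers σ)) {d : G} (hd : d ∈ D) :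
    Commute (σ ^ 2) d := by
  obtain ⟨n, hn, hle⟩ := exists_conj_smul_le_sylow S hSD (zpowers_le.2 hσ) hσ2
  have hs : MulAut.conj n σ ∈ S := hle (smul_mem_pointwise_smul _ _ _ (mem_zpowers σ))
  have hnd : MulAut.conj n d ∈ D := (mem_normalizer_iff.1 hn d).1 hd
  have := mem_centralizer_iff.1 (h.sq_mem hs).2 _ (hDS hnd)
  rw [← map_pow, ← map_mul, ← map_mul] at this
  exact ((MulAut.conj n).injective this).symm

theorem eq_one_of_conj_sq_apply [Finite G] (S : Sylow 2 G) (h : IsElemAbOfIndexTwo T S)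
    {D : Subgroup G} (hDS : D ≤ S) (hSD : (S : Subgroup G) ≤ normalizer (D : Set G))
    {k ζ a : G} (hk : k ∈ normalizer (D : Set G)) (hζ : ζ ∈ D) (hka : MulAut.conj k a = a)
    (ha : a ^ 2 = 1) (hkζ : MulAut.conj (k ^ 2) ζ = a * ζ) : a = 1 := by
  obtain ⟨m, ⟨j, rfl⟩, hm⟩ := exists_odd_isPGroup_zpowers_pow k
  have hfix : MulAut.conj ((k ^ (2 * j + 1)) ^ 2) ζ = ζ :=
    (h.commute_sq_of_mem_normalizer S hDS hSD (pow_mem hk _) hm hζ).mul_inv_cancel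
  have hka2 : MulAut.conj (k ^ 2) a = a := by rw [map_pow, sq, MulAut.mul_apply, hka, hka]
  rw [← pow_mul, mul_comm, pow_mul, MulAut.conj_pow_apply_eq_pow_mul hka2 hkζ, pow_succ,
    pow_mul, ha, one_pow, one_mul] at hfix
  exact mul_eq_right.1 hfix

theorem not_inf_centralizer_singleton_le [Finite G] (S : Sylow 2 G) (h : IsElemAbOfIndexTwo T S)
    (hZT : 2 * Nat.card ↥(T ⊓ centralizer (S : Subgroup G)) < Nat.card T) {y : G}
    (hy : y ∈ S) (hyT : y ∉ T) {K : Subgroup G} (hK2 : IsPGroup 2 K) (hK : K ≤ centralizer K)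
    (hTK : Nat.card T ≤ Nat.card K) : ¬ (S : Subgroup G) ⊓ centralizer {y} ≤ K := by
  intro hDK
  have hSD := h.le_normalizer_inf_centralizer_singleton hy
  have hKD : K ≤ normalizer ((S : Subgroup G) ⊓ centralizer {y} : Subgroup G) :=
    hK.trans ((centralizer_le hDK).trans (centralizer_le_normalizer _))
  obtain ⟨n, hn, hle⟩ := exists_conj_smul_le_sylow S hSD hKD hK2
  have hnK : MulAut.conj n • K ≤ T := by
    refine h.le_of_card_lt hle ?_ (by rw [card_pointwise_smul]; omega)
    rw [centralizer_pointwise_smul]; exact pointwise_smul_le_pointwise_smul_iff.2 hK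
  refine hyT (hnK (mem_pointwise_smul_iff_inv_smul_mem.2 (hDK ?_)))
  simpa [MulAut.smul_def] using
    (mem_normalizer_iff''.1 hn y).1 ⟨hy, mem_centralizer_singleton_iff.2 rfl⟩

theorem inf_centralizer_le_of_mem_smul [Finite G] (S : Sylow 2 G) (h : IsElemAbOfIndexTwo T S)
    (hcard : Nat.card ↥(T ⊓ centralizer (S : Subgroup G)) ^ 2 = Nat.card T)
    (hZ : 2 < Nat.card ↥(T ⊓ centralizer (S : Subgroup G))) (c : G) {y : G}
    (hy : y ∈ S) (hyT : y ∉ T) (hyT₁ : y ∈ MulAut.conj c • T)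
    (hD : (S : Subgroup G) ⊓ centralizer {y} ≤ MulAut.conj c • (S : Subgroup G)) :
    T ⊓ centralizer (S : Subgroup G) ≤ MulAut.conj c • T := by
  set Z := T ⊓ centralizer (S : Subgroup G)
  set S₁ := MulAut.conj c • (S : Subgroup G)
  set T₁ := MulAut.conj c • T
  have h₁ : IsElemAbOfIndexTwo T₁ S₁ := h.smul _
  have hZ₁ : Nat.card ↥(T₁ ⊓ centralizer S₁) = Nat.card Z := card_smul_inf_centralizer _
  have hcard₁ : Nat.card ↥(T₁ ⊓ centralizer S₁) ^ 2 = Nat.card T₁ := by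
    rw [hZ₁, card_pointwise_smul, hcard]
  intro ζ hζ
  by_contra hζT₁
  set D := (S : Subgroup G) ⊓ centralizer {y}
  have hζD : ζ ∈ D := h.inf_centralizer_le_inf_centralizer_singleton hy hζ
  have hζS₁ : ζ ∈ S₁ := hD hζD
  have hyZ₁ : y ∈ T₁ ⊓ centralizer S₁ := by
    rw [← h₁.inf_centralizer_singleton hζS₁ hζT₁]
    exact ⟨hyT₁, mem_centralizer_singleton_iff.2 (mem_centralizer_iff.1 hζ.2 y hy)⟩
  have hDD₁ : D = S₁ ⊓ centralizer {ζ} := by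
    refine eq_of_le_of_card_ge (fun d hd ↦ ⟨hD hd, mem_centralizer_singleton_iff.2 ?_⟩) ?_
    · exact mem_centralizer_iff.1 hζ.2 d hd.1
    · rw [h₁.card_inf_centralizer_singleton hζS₁ hζT₁, h.card_inf_centralizer_singleton hy hyT,
        hZ₁]
  obtain ⟨a, ⟨haZ, haZ₁⟩, ha1⟩ := exists_ne_one_mem_inf_of_card_lt
    (h.inf_centralizer_le_inf_centralizer_singleton hy)
    (hDD₁ ▸ h₁.inf_centralizer_le_inf_centralizer_singleton hζS₁)
    (by rw [h.card_inf_centralizer_singleton hy hyT, hZ₁]; nlinarith)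
  obtain ⟨u, hu, hua⟩ := h.exists_commutatorElement_eq hcard hy hyT haZ
  obtain ⟨w, hw, hwζ⟩ := h₁.exists_commutatorElement_eq hcard₁ hζS₁ hζT₁ hyZ₁
  have hSD := h.le_normalizer_inf_centralizer_singleton hy
  have hS₁D : S₁ ≤ normalizer (D : Set G) :=
    hDD₁ ▸ h₁.le_normalizer_inf_centralizer_singleton hζS₁
  have hua₀ : Commute u a := h.commute hu haZ.1
  have hwa : Commute w a := h₁.commute hw haZ₁.1
  refine ha1 (h.eq_one_of_conj_sq_apply S inf_le_left hSD
    (mul_mem (hSD (h.le hu)) (hS₁D (h₁.le hw))) hζD (hua₀.mul_left hwa).mul_inv_cancel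
    (h.sq_eq_one a haZ.1) ?_)
  exact MulAut.conj_mul_sq_apply hua hwζ (h.commute hu hζ.1) (h₁.commute hw hyT₁) hua₀ hwa
    (mem_centralizer_iff.1 haZ.2 y hy).symm (h.sq_eq_one a haZ.1) (h₁.sq_eq_one y hyT₁)

theorem isStronglyClosed [Finite G] (S : Sylow 2 G) (h : IsElemAbOfIndexTwo T S)
    (hcard : Nat.card ↥(T ⊓ centralizer (S : Subgroup G)) ^ 2 = Nat.card T)
    (hZ : 2 < Nat.card ↥(T ⊓ centralizer (S : Subgroup G))) : IsStronglyClosed T S := by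
  intro x hx g hg
  set y := g * x * g⁻¹
  by_contra hyT
  have hZT : 2 * Nat.card ↥(T ⊓ centralizer (S : Subgroup G)) < Nat.card T := by
    rw [← hcard]; nlinarith
  have hT2 : IsPGroup 2 T := S.isPGroup'.to_le h.le
  have hsmulT2 : ∀ a : MulAut G, IsPGroup 2 ↥(a • T) := fun a ↦ hT2.of_equiv (equivSMul a T)
  have hTy : MulAut.conj g • T ≤ centralizer {y} := by
    rintro _ ⟨t, ht, rfl⟩
    exact mem_centralizer_singleton_iff.2 (by
      simpa [y, MulAut.smul_def] using congrArg (MulAut.conj g) (h.commute ht hx).eq)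
  obtain ⟨P, hP, hDP, hPy, hTP⟩ := IsPGroup.exists_isPGroup_between_card_le
    (S.isPGroup'.to_le inf_le_left) (hsmulT2 _) inf_le_right hTy
  rw [card_pointwise_smul] at hTP
  obtain ⟨S₁, hPS₁⟩ := hP.exists_le_sylow
  obtain ⟨c, rfl⟩ := MulAction.exists_smul_eq G S S₁
  have h₁ := h.smul (MulAut.conj c)
  have hyT₁ : y ∈ MulAut.conj c • T := by
    by_contra hyT₁
    have hyS₁ : y ∈ MulAut.conj c • (S : Subgroup G) :=
      hPS₁ (hDP ⟨hg, mem_centralizer_singleton_iff.2 rfl⟩)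
    have hPD₁ : P ≤ MulAut.conj c • (S : Subgroup G) ⊓ centralizer {y} := le_inf hPS₁ hPy
    have := card_le_of_le hPD₁
    rw [h₁.card_inf_centralizer_singleton hyS₁ hyT₁, card_smul_inf_centralizer] at this
    omega
  have hZT₁ := h.inf_centralizer_le_of_mem_smul S hcard hZ c hg hyT hyT₁ (hDP.trans hPS₁)
  exact h.not_inf_centralizer_singleton_le S hZT hg hyT (hsmulT2 _) h₁.le_centralizer
    (card_pointwise_smul _ T).ge (h.inf_centralizer_singleton_le hg hyT hZT₁ hyT₁)

end IsElemAbOfIndexTwo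

end

/-- Let `G` be a finite group, `S` a Sylow `2`-subgroup and `T ≤ S` with
(i) `T` elementary abelian of index `2` in `S`, (ii) `|C_T(S)|² = |T|`.  Then either `|T| = 4`
or `T` is strongly closed in `S` with respect to `G`. -/
theorem strongly_closed_or_card_four
    {G : Type*} [Group G] [Finite G] (S : Sylow 2 G) (T : Subgroup G)
    (hTS : T ≤ (S : Subgroup G))
    (hea : IsElementaryAbelian 2 T)
    (hidx : T.relIndex (S : Subgroup G) = 2)
    (hcent : Nat.card ↥(T ⊓ Subgroup.centralizer ((S : Subgroup G) : Set G)) ^ 2 =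
      Nat.card ↥T) :
    Nat.card ↥T = 4 ∨
      ∀ x ∈ T, ∀ g : G, g * x * g⁻¹ ∈ (S : Subgroup G) → g * x * g⁻¹ ∈ T := by
  have h : IsElemAbOfIndexTwo T S :=
    ⟨hTS, fun t ht t' ht' ↦ congrArg Subtype.val (hea.1 ⟨t', ht'⟩ ⟨t, ht⟩),
      fun t ht ↦ congrArg Subtype.val (hea.2 ⟨t, ht⟩), hidx⟩
  by_cases hZ : 2 < Nat.card ↥(T ⊓ centralizer ((S : Subgroup G) : Set G))
  · exact Or.inr (h.isStronglyClosed S hcent hZ)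
  have hZ1 : Nat.card ↥(T ⊓ centralizer ((S : Subgroup G) : Set G)) = 1 ∨ Nat.card T = 4 := by
    have := Nat.card_pos (α := ↥(T ⊓ centralizer ((S : Subgroup G) : Set G)))
    interval_cases n : Nat.card ↥(T ⊓ centralizer ((S : Subgroup G) : Set G)) <;> omega
  rcases hZ1 with hZ1 | h4
  · rw [hZ1, one_pow, eq_comm, card_eq_one] at hcent
    refine Or.inr fun x hx g _ ↦ ?_
    rw [hcent, mem_bot] at hx
    simp [hx]
  · exact Or.inl h4
end

section
/- Let G be a finite group, S a Sylow 2-subgroup of G, T a subgroup of S, K a subgroup of N_G(T), and Z = Z(T). Assume: (i) |S : T| = 2 and |Z : C_Z(S)| = 2; (ii) |K| is odd, C_Z(K) ≠ Z, and the only K-invariant subgroups X of Z with C_Z(K) ≤ X ≤ Z are C_Z(K) and Z (K acts irreducibly on Z/C_Z(K) by conjugation); (iii) C_Z(K) ∩ C_Z(S) = 1. Then |Z| = 4. -/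
/-!
Conjugation makes `N_G(Z)` act on the abelian group `Z`; `T` acts trivially and `|N_G(Z) : T|` is
twice an odd number, so the image `R ≤ Aut(Z)` has order not divisible by `4`, and two nontrivial
commuting involutions of `R` coincide. An element of `S \ T` induces an involution `σ` with
`|Z : C_Z(σ)| = 2`, i.e. `z⁻¹ σ(z) ∈ {1, u}` for a fixed centre `u`: a transvection.

Distinct transvections in `R` never commute, so none fixes the centre of another, and conjugating
one by the other multiplies their centres. Hence the centres together with `1` form an
`R`-invariant subgroup `U` in which `σ` fixes only `1` and `u`, so `|U| ≤ 4`. Since `u ∉ C_Z(K)`,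
irreducibility gives `Z = C_Z(K) U`, and `C_Z(K) ∩ C_Z(σ) = 1` gives `|C_Z(K)| ≤ 2`. If `σ` is the
only transvection then `|U| = 2`; otherwise the common fixed points of two transvections form an
`R`-invariant subgroup which, were `U ≠ Z`, would have order `2` and so lie in
`C_Z(K) ∩ C_Z(S) = 1`. In both cases `|Z| ≤ 4`, while `|Z|` is even and `K` moves some element
of `Z`, so `|Z| > 2`.
-/

/-- The center `Z(H)` of a subgroup `H`, as a subgroup of the ambient group. -/
def relCenter {G : Type*} [Group G] (H : Subgroup G) : Subgroup G :=
  H ⊓ Subgroup.centralizer (H : Set G)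

open Subgroup

namespace Subgroup

variable {G : Type*} [Group G]

theorem card_inf_mul_relIndex (H K : Subgroup G) :
    Nat.card ↥(H ⊓ K) * H.relIndex K = Nat.card K := by
  simpa [relIndex_bot_left] using relIndex_inf_mul_relIndex ⊥ H K

theorem card_le_two_of_forall_eq_one_or_eq {W : Subgroup G} {u : G} (h : ∀ w ∈ W, w = 1 ∨ w = u) :
    Nat.card W ≤ 2 := by
  rw [← SetLike.coe_sort_coe, Nat.card_coe_set_eq]
  calc (W : Set G).ncard ≤ ({1, u} : Set G).ncard := Set.ncard_le_ncard h
    _ ≤ 2 := (Set.ncard_insert_le _ _).trans (by simp)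

theorem eq_of_card_le_two {W : Subgroup G} [Finite W] (hW : Nat.card W ≤ 2) {x y : G}
    (hx : x ∈ W) (hy : y ∈ W) (hx1 : x ≠ 1) (hy1 : y ≠ 1) : x = y := by
  by_contra hxy
  have h3 : ({1, x, y} : Set G).ncard = 3 :=
    Set.ncard_eq_three.mpr ⟨1, x, y, hx1.symm, hy1.symm, hxy, rfl⟩
  have hle : ({1, x, y} : Set G).ncard ≤ (W : Set G).ncard := by
    refine Set.ncard_le_ncard ?_ (Set.toFinite _)
    rintro _ (rfl | rfl | rfl)
    exacts [W.one_mem, hx, hy]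
  rw [← Nat.card_coe_set_eq (W : Set G), SetLike.coe_sort_coe] at hle
  omega

theorem eq_of_commute_of_sq_eq_one {R : Subgroup G} (hR : ¬ 4 ∣ Nat.card R) {x y : G}
    (hx : x ∈ R) (hy : y ∈ R) (hx1 : x ≠ 1) (hy1 : y ≠ 1) (hx2 : x ^ 2 = 1) (hy2 : y ^ 2 = 1)
    (hxy : Commute x y) : x = y := by
  have : Finite R := Nat.finite_of_card_ne_zero fun h => hR (h ▸ dvd_zero 4)
  have hzpowers : ∀ {z : G}, z ^ 2 = 1 → z ≠ 1 → IsPGroup 2 (zpowers z) := fun hz2 hz1 =>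
    IsPGroup.of_card (n := 1) (by rw [Nat.card_zpowers, orderOf_eq_prime hz2 hz1, pow_one])
  have hxN : zpowers x ≤ normalizer (zpowers y : Set G) := by
    refine zpowers_le.mpr (centralizer_le_normalizer _ (mem_centralizer_iff.mpr ?_))
    rintro _ ⟨k, rfl⟩
    exact (hxy.symm.zpow_left k).eq
  set P := zpowers x ⊔ zpowers y
  have hPR : P ≤ R := sup_le (zpowers_le.mpr hx) (zpowers_le.mpr hy)
  have : Finite P := Finite.of_injective _ (inclusion_injective hPR)
  have hP : IsPGroup 2 P := (hzpowers hx2 hx1).to_sup_of_normal_right' (hzpowers hy2 hy1) hxN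
  obtain ⟨n, hn⟩ := hP.exists_card_eq
  by_contra hne
  have h2n : 2 < 2 ^ n := hn ▸ not_le.mp fun h =>
    hne (eq_of_card_le_two h (mem_sup_left (mem_zpowers x)) (mem_sup_right (mem_zpowers y)) hx1 hy1)
  have hn2 : 2 ≤ n := by
    by_contra! h
    interval_cases n <;> simp at h2n
  exact hR ((hn ▸ pow_dvd_pow 2 hn2 : 2 ^ 2 ∣ Nat.card P).trans (card_dvd_of_le hPR))

theorem le_normalizer_of_relIndex_eq_two {S T : Subgroup G} (hTS : T ≤ S) (h : T.relIndex S = 2) :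
    S ≤ normalizer (T : Set G) :=
  (normal_subgroupOf_iff_le_normalizer hTS).mp (normal_of_index_eq_two h)

theorem fixedPoints_range_normalizerMonoidHom_comp {H K : Subgroup G}
    (hK : K ≤ normalizer (H : Set G)) :
    FixedPoints.subgroup (H.normalizerMonoidHom.comp (inclusion hK)).range H =
      (centralizer (K : Set G)).subgroupOf H := by
  ext z
  simp only [FixedPoints.mem_subgroup, mem_subgroupOf, mem_centralizer_iff, SetLike.mem_coe]
  constructor
  · intro hz k hk
    have := congrArg Subtype.val (hz ⟨_, ⟨k, hk⟩, rfl⟩)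
    simp only [Subgroup.smul_def, MulAut.smul_def, MonoidHom.comp_apply,
      normalizerMonoidHom_apply_apply_coe, coe_inclusion] at this
    exact mul_inv_eq_iff_eq_mul.mp this
  · rintro hz ⟨_, ⟨k, hk⟩, rfl⟩
    apply Subtype.ext
    simp only [Subgroup.smul_def, MulAut.smul_def, MonoidHom.comp_apply,
      normalizerMonoidHom_apply_apply_coe, coe_inclusion]
    rw [mul_inv_eq_iff_eq_mul]
    exact hz k hk

theorem conj_mem_map_subtype {H K : Subgroup G} (hK : K ≤ normalizer (H : Set G)) {X : Subgroup H}
    (hX : ∀ a ∈ (H.normalizerMonoidHom.comp (inclusion hK)).range, ∀ x ∈ X, a x ∈ X) :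
    ∀ k ∈ K, ∀ x ∈ X.map H.subtype, k * x * k⁻¹ ∈ X.map H.subtype := by
  rintro k hk _ ⟨x, hx, rfl⟩
  exact ⟨_, hX _ ⟨⟨k, hk⟩, rfl⟩ x hx, rfl⟩

end Subgroup

theorem two_lt_card_of_fixedPoints_ne_top {M V : Type*} [Group M] [Group V] [Finite V]
    [MulDistribMulAction M V] (h : FixedPoints.subgroup M V ≠ ⊤) : 2 < Nat.card V := by
  obtain ⟨v, hv⟩ : ∃ v, v ∉ FixedPoints.subgroup M V := by
    by_contra! hall
    exact h ((eq_top_iff' _).mpr hall)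
  obtain ⟨m, hm⟩ : ∃ m : M, m • v ≠ v := by
    simpa [FixedPoints.mem_subgroup] using hv
  have hv1 : v ≠ 1 := by
    rintro rfl
    exact hm (smul_one m)
  have hmv1 : m • v ≠ 1 := fun h1 => hv1 (by simpa using congrArg (m⁻¹ • ·) h1)
  rw [← card_top (G := V)]
  exact not_le.mp fun h2 => hm (eq_of_card_le_two h2 (mem_top _) (mem_top _) hmv1 hv1)


namespace MulAut

variable {V : Type*} [CommGroup V]

def displacement (τ : MulAut V) : V →* V where
  toFun z := z⁻¹ * τ z
  map_one' := by simp
  map_mul' a b := by rw [map_mul, mul_inv, mul_mul_mul_comm]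

@[simp]
theorem displacement_apply (τ : MulAut V) (z : V) : τ.displacement z = z⁻¹ * τ z := rfl

theorem mem_ker_displacement {τ : MulAut V} {z : V} : z ∈ τ.displacement.ker ↔ τ z = z := by
  rw [MonoidHom.mem_ker, displacement_apply, inv_mul_eq_one, eq_comm]

/-- Over `𝔽₂` these are exactly the transvections with centre `u`. -/
structure IsTransvection (τ : MulAut V) (u : V) : Prop where
  sq_eq_one : τ ^ 2 = 1
  ne_one : τ ≠ 1
  apply_eq_or : ∀ z, τ z = z ∨ τ z = z * u

theorem exists_isTransvection_of_index_eq_two {τ : MulAut V} (hτ : τ ^ 2 = 1)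
    (h : τ.displacement.ker.index = 2) : ∃ u, IsTransvection τ u := by
  obtain ⟨z₁, hz₁⟩ : ∃ z, z ∉ τ.displacement.ker := by
    by_contra! hall
    rw [(eq_top_iff' _).mpr hall, index_top] at h
    omega
  refine ⟨τ.displacement z₁, hτ, fun h1 => hz₁ (by simp [h1]), fun z => ?_⟩
  by_cases hz : z ∈ τ.displacement.ker
  · exact .inl (mem_ker_displacement.mp hz)
  · have hz₁z : z₁⁻¹ * z ∈ τ.displacement.ker := by
      rw [mul_mem_iff_of_index_two h, inv_mem_iff]
      tauto
    rw [MonoidHom.mem_ker, map_mul, map_inv, inv_mul_eq_one] at hz₁z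
    rw [hz₁z]
    simp

namespace IsTransvection

variable {τ τ₁ τ₂ : MulAut V} {u v u₁ u₂ : V}

theorem apply_apply (h : IsTransvection τ u) (z : V) : τ (τ z) = z := by
  simpa [sq] using congr($(h.sq_eq_one) z)

theorem exists_apply_ne (h : IsTransvection τ u) : ∃ z, τ z ≠ z := by
  by_contra! hz
  exact h.ne_one (MulEquiv.ext hz)

theorem apply_of_apply_ne (h : IsTransvection τ u) {z : V} (hz : τ z ≠ z) : τ z = z * u :=
  (h.apply_eq_or z).resolve_left hz

theorem unique (h : IsTransvection τ u) (h' : IsTransvection τ v) : u = v := by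
  obtain ⟨z, hz⟩ := h.exists_apply_ne
  exact mul_left_cancel ((h.apply_of_apply_ne hz).symm.trans (h'.apply_of_apply_ne hz))

theorem center_ne_one (h : IsTransvection τ u) : u ≠ 1 := by
  rintro rfl
  obtain ⟨z, hz⟩ := h.exists_apply_ne
  exact hz (by simpa using h.apply_eq_or z)

theorem mul_self_center (h : IsTransvection τ u) : u * u = 1 := by
  obtain ⟨z, hz⟩ := h.exists_apply_ne
  have hτz := h.apply_of_apply_ne hz
  have hτzu : τ (z * u) = z := by rw [← hτz, h.apply_apply]
  rcases h.apply_eq_or (z * u) with h' | h'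
  · exact absurd (by simpa using hτzu.symm.trans h') h.center_ne_one
  · simpa [mul_assoc] using (hτzu.symm.trans h').symm

theorem apply_center (h : IsTransvection τ u) : τ u = u := by
  obtain ⟨z, hz⟩ := h.exists_apply_ne
  have hτzu : τ (z * u) = z := by rw [← h.apply_of_apply_ne hz, h.apply_apply]
  rw [map_mul, h.apply_of_apply_ne hz, mul_assoc, mul_eq_left] at hτzu
  exact (eq_inv_of_mul_eq_one_right hτzu).trans (eq_inv_of_mul_eq_one_left h.mul_self_center).symm

theorem conj (h : IsTransvection τ u) (a : MulAut V) : IsTransvection (a * τ * a⁻¹) (a u) where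
  sq_eq_one := by rw [conj_pow, h.sq_eq_one, mul_one, mul_inv_cancel]
  ne_one hτ := h.ne_one (by simpa [mul_inv_eq_one] using hτ)
  apply_eq_or z := by
    rcases h.apply_eq_or (a.symm z) with h' | h' <;> simp [MulAut.mul_apply, h']

theorem commute_of_apply_center (h₁ : IsTransvection τ₁ u₁) (h₂ : IsTransvection τ₂ u₂)
    (h₁₂ : τ₁ u₂ = u₂) (h₂₁ : τ₂ u₁ = u₁) : Commute τ₁ τ₂ :=
  MulEquiv.ext fun z => by
    rcases h₁.apply_eq_or z with e₁ | e₁ <;> rcases h₂.apply_eq_or z with e₂ | e₂ <;>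
      simp [MulAut.mul_apply, e₁, e₂, h₁₂, h₂₁, mul_right_comm]

theorem card_le_two_mul_card_inf (h : IsTransvection τ u) (W : Subgroup V) :
    Nat.card W ≤ 2 * Nat.card ↥(τ.displacement.ker ⊓ W) := by
  rw [← card_inf_mul_relIndex τ.displacement.ker W, relIndex_ker, mul_comm]
  refine Nat.mul_le_mul_right _ (card_le_two_of_forall_eq_one_or_eq (u := u) ?_)
  rintro _ ⟨z, -, rfl⟩
  rcases h.apply_eq_or z with h' | h' <;> simp [h']

end IsTransvection

variable {R : Subgroup (MulAut V)}

namespace IsTransvection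

variable {σ τ τ₁ τ₂ ρ : MulAut V} {u w x u₁ u₂ : V}

theorem eq_of_commute (hR : ¬ 4 ∣ Nat.card R) (h₁ : IsTransvection τ₁ u₁)
    (h₂ : IsTransvection τ₂ u₂) (hτ₁ : τ₁ ∈ R) (hτ₂ : τ₂ ∈ R) (hc : Commute τ₁ τ₂) : τ₁ = τ₂ :=
  eq_of_commute_of_sq_eq_one hR hτ₁ hτ₂ h₁.ne_one h₂.ne_one h₁.sq_eq_one h₂.sq_eq_one hc

theorem eq_of_center_eq (hR : ¬ 4 ∣ Nat.card R) (h₁ : IsTransvection τ₁ u)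
    (h₂ : IsTransvection τ₂ u) (hτ₁ : τ₁ ∈ R) (hτ₂ : τ₂ ∈ R) : τ₁ = τ₂ :=
  h₁.eq_of_commute hR h₂ hτ₁ hτ₂ (h₁.commute_of_apply_center h₂ h₁.apply_center h₂.apply_center)

theorem apply_center_ne (hR : ¬ 4 ∣ Nat.card R) (h₁ : IsTransvection τ₁ u₁)
    (h₂ : IsTransvection τ₂ u₂) (hτ₁ : τ₁ ∈ R) (hτ₂ : τ₂ ∈ R) (hne : τ₁ ≠ τ₂) : τ₁ u₂ ≠ u₂ := by
  intro hfix
  have hconj : τ₁ * τ₂ * τ₁⁻¹ = τ₂ :=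
    (hfix ▸ h₂.conj τ₁).eq_of_center_eq hR h₂ (R.mul_mem (R.mul_mem hτ₁ hτ₂) (R.inv_mem hτ₁)) hτ₂
  exact hne (h₁.eq_of_commute hR h₂ hτ₁ hτ₂ (mul_inv_eq_iff_eq_mul.mp hconj))

theorem apply_center_of_ne (hR : ¬ 4 ∣ Nat.card R) (h₁ : IsTransvection τ₁ u₁)
    (h₂ : IsTransvection τ₂ u₂) (hτ₁ : τ₁ ∈ R) (hτ₂ : τ₂ ∈ R) (hne : τ₁ ≠ τ₂) :
    τ₁ u₂ = u₂ * u₁ :=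
  h₁.apply_of_apply_ne (h₁.apply_center_ne hR h₂ hτ₁ hτ₂ hne)

end IsTransvection

def transvectionCenters (R : Subgroup (MulAut V)) : Set V :=
  {u | ∃ τ ∈ R, IsTransvection τ u}

variable {σ τ ρ a : MulAut V} {u v w x : V}

theorem apply_mem_closure_transvectionCenters (ha : a ∈ R)
    (hw : w ∈ closure (transvectionCenters R)) : a w ∈ closure (transvectionCenters R) := by
  induction hw using closure_induction with
  | mem v hv =>
    obtain ⟨τ, hτR, hτ⟩ := hv
    exact subset_closure ⟨a * τ * a⁻¹, R.mul_mem (R.mul_mem ha hτR) (R.inv_mem ha), hτ.conj a⟩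
  | one => simp
  | mul v w _ _ hv hw => simpa using mul_mem hv hw
  | inv w _ hw => simpa using inv_mem hw

theorem mul_mem_transvectionCenters (hR : ¬ 4 ∣ Nat.card R) (hv : v ∈ transvectionCenters R)
    (hw : w ∈ transvectionCenters R) (hne : v ≠ w) : v * w ∈ transvectionCenters R := by
  obtain ⟨τ₁, hτ₁R, hτ₁⟩ := hv
  obtain ⟨τ₂, hτ₂R, hτ₂⟩ := hw
  have hτne : τ₁ ≠ τ₂ := by
    rintro rfl
    exact hne (hτ₁.unique hτ₂)
  refine ⟨τ₁ * τ₂ * τ₁⁻¹, R.mul_mem (R.mul_mem hτ₁R hτ₂R) (R.inv_mem hτ₁R), ?_⟩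
  simpa [hτ₁.apply_center_of_ne hR hτ₂ hτ₁R hτ₂R hτne, mul_comm] using hτ₂.conj τ₁

theorem eq_one_or_mem_transvectionCenters_of_mem_closure (hR : ¬ 4 ∣ Nat.card R)
    (hw : w ∈ closure (transvectionCenters R)) : w = 1 ∨ w ∈ transvectionCenters R := by
  induction hw using closure_induction with
  | mem v hv => exact .inr hv
  | one => exact .inl rfl
  | mul v w _ _ hv hw =>
    rcases hv with rfl | hv
    · simpa using hw
    rcases hw with rfl | hw
    · simpa using Or.inr hv
    by_cases hvw : v = w
    · obtain ⟨τ, -, hτ⟩ := hw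
      exact .inl (hvw ▸ hτ.mul_self_center)
    · exact .inr (mul_mem_transvectionCenters hR hv hw hvw)
  | inv w _ hw =>
    rcases hw with rfl | hw
    · simp
    · obtain ⟨τ, hτR, hτ⟩ := hw
      simpa [inv_eq_of_mul_eq_one_right hτ.mul_self_center] using Or.inr ⟨τ, hτR, hτ⟩

theorem eq_one_or_eq_of_mem_closure_of_apply_eq (hR : ¬ 4 ∣ Nat.card R) (hσR : σ ∈ R)
    (hσ : IsTransvection σ u) (hw : w ∈ closure (transvectionCenters R)) (hfix : σ w = w) :
    w = 1 ∨ w = u := by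
  refine (eq_one_or_mem_transvectionCenters_of_mem_closure hR hw).imp_right fun ⟨τ, hτR, hτ⟩ => ?_
  by_cases hστ : σ = τ
  · exact (hσ.unique (hστ ▸ hτ)).symm
  · exact absurd hfix (hσ.apply_center_ne hR hτ hσR hτR hστ)

/-- The centre of a third transvection differs from that of `τ` by a `σ`-fixed element of the
centre group, which can only be `u`. -/
theorem eq_or_eq_or_eq_conj (hR : ¬ 4 ∣ Nat.card R) (hσR : σ ∈ R) (hσ : IsTransvection σ u)
    (hτR : τ ∈ R) (hτ : IsTransvection τ x) (hne : σ ≠ τ) (hρR : ρ ∈ R)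
    (hρ : IsTransvection ρ w) : ρ = σ ∨ ρ = τ ∨ ρ = σ * τ * σ⁻¹ := by
  by_cases hρσ : ρ = σ
  · exact .inl hρσ
  have hσw : σ w = w * u := hσ.apply_center_of_ne hR hρ hσR hρR (Ne.symm hρσ)
  have hσx : σ x = x * u := hσ.apply_center_of_ne hR hτ hσR hτR hne
  have hmem : x⁻¹ * w ∈ closure (transvectionCenters R) :=
    mul_mem (inv_mem (subset_closure ⟨τ, hτR, hτ⟩)) (subset_closure ⟨ρ, hρR, hρ⟩)
  have hfix : σ (x⁻¹ * w) = x⁻¹ * w := by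
    rw [map_mul, map_inv, hσw, hσx, mul_inv, mul_mul_mul_comm, inv_mul_cancel, mul_one]
  have hconjR : σ * τ * σ⁻¹ ∈ R := R.mul_mem (R.mul_mem hσR hτR) (R.inv_mem hσR)
  rcases eq_one_or_eq_of_mem_closure_of_apply_eq hR hσR hσ hmem hfix with h | h
  · rw [inv_mul_eq_one] at h
    exact .inr (.inl (hρ.eq_of_center_eq hR (h ▸ hτ) hρR hτR))
  · rw [inv_mul_eq_iff_eq_mul] at h
    have hconj := hτ.conj σ
    rw [hσx, ← h] at hconj
    exact .inr (.inr (hρ.eq_of_center_eq hR hconj hρR hconjR))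

variable {c : V}

theorem closure_transvectionCenters_inf_eq_bot (hR : ¬ 4 ∣ Nat.card R) (hσR : σ ∈ R)
    (hσ : IsTransvection σ u) (hτR : τ ∈ R) (hτ : IsTransvection τ x) (hne : σ ≠ τ) :
    closure (transvectionCenters R) ⊓ (σ.displacement.ker ⊓ τ.displacement.ker) = ⊥ := by
  rw [eq_bot_iff]
  rintro w ⟨hwU, hwσ, hwτ⟩
  rcases eq_one_or_eq_of_mem_closure_of_apply_eq hR hσR hσ hwU (mem_ker_displacement.mp hwσ)
    with rfl | rfl
  · exact one_mem _
  · exact absurd (mem_ker_displacement.mp hwτ) (hτ.apply_center_ne hR hσ hτR hσR (Ne.symm hne))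

theorem apply_mem_inf_ker_displacement (hR : ¬ 4 ∣ Nat.card R) (hσR : σ ∈ R)
    (hσ : IsTransvection σ u) (hτR : τ ∈ R) (hτ : IsTransvection τ x) (hne : σ ≠ τ) (ha : a ∈ R)
    (hc : c ∈ σ.displacement.ker ⊓ τ.displacement.ker) :
    a c ∈ σ.displacement.ker ⊓ τ.displacement.ker := by
  have hσc : σ c = c := mem_ker_displacement.mp hc.1
  have hτc : τ c = c := mem_ker_displacement.mp hc.2
  have hfix : ∀ ρ ∈ R, ∀ w, IsTransvection ρ w → ρ c = c := by
    intro ρ hρR w hρ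
    rcases eq_or_eq_or_eq_conj hR hσR hσ hτR hτ hne hρR hρ with rfl | rfl | rfl
    · exact hσc
    · exact hτc
    · have hσc' : σ⁻¹ c = c := by rw [← hσc, MulAut.inv_apply_self, hσc]
      rw [MulAut.mul_apply, MulAut.mul_apply, hσc', hτc, hσc]
  have hfix_a : ∀ ρ ∈ R, ∀ w, IsTransvection ρ w → ρ (a c) = a c := by
    intro ρ hρR w hρ
    have := hfix _ (R.mul_mem (R.mul_mem (R.inv_mem ha) hρR) (R.inv_mem (R.inv_mem ha))) _
      (hρ.conj a⁻¹)
    simpa [MulAut.mul_apply, MulEquiv.symm_apply_eq] using this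
  exact ⟨mem_ker_displacement.mpr (hfix_a σ hσR u hσ),
    mem_ker_displacement.mpr (hfix_a τ hτR x hτ)⟩

/-- The common fixed points of `σ` and `τ` form an `R`-invariant subgroup meeting the centre group
trivially, hence of order `2` if that group is proper; its generator is then fixed by `KR` and by
`σ`. -/
theorem closure_transvectionCenters_eq_top [Finite V] {KR : Subgroup (MulAut V)}
    (hR : ¬ 4 ∣ Nat.card R) (hKR : KR ≤ R) (hσR : σ ∈ R) (hσ : IsTransvection σ u) (hτR : τ ∈ R)
    (hτ : IsTransvection τ x) (hne : σ ≠ τ)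
    (hσV₀ : FixedPoints.subgroup KR V ⊓ σ.displacement.ker = ⊥)
    (hidx : (closure (transvectionCenters R)).index ≤ 2) :
    closure (transvectionCenters R) = ⊤ := by
  set U := closure (transvectionCenters R)
  set F := σ.displacement.ker ⊓ τ.displacement.ker
  by_contra hU
  have hidx2 : U.index = 2 := by
    have := U.index_ne_zero_of_finite
    have := mt index_eq_one.mp hU
    omega
  have hF2 : Nat.card F ≤ 2 := by
    have hcard := card_inf_mul_relIndex U F
    rw [closure_transvectionCenters_inf_eq_bot hR hσR hσ hτR hτ hne, card_bot, one_mul] at hcard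
    rw [← hcard, ← hidx2, ← relIndex_top_right]
    exact relIndex_le_of_le_right le_top (by rw [relIndex_top_right]; omega)
  have hU2 : 2 < Nat.card U := not_le.mp fun h => hne <| hσ.eq_of_center_eq hR
    (eq_of_card_le_two h (subset_closure ⟨σ, hσR, hσ⟩) (subset_closure ⟨τ, hτR, hτ⟩)
      hσ.center_ne_one hτ.center_ne_one ▸ hτ) hσR hτR
  have hVF : Nat.card V ≤ 2 * (2 * Nat.card F) :=
    calc Nat.card V = Nat.card (⊤ : Subgroup V) := card_top.symm
      _ ≤ 2 * Nat.card ↥(σ.displacement.ker ⊓ ⊤) := hσ.card_le_two_mul_card_inf ⊤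
      _ ≤ 2 * (2 * Nat.card ↥(τ.displacement.ker ⊓ (σ.displacement.ker ⊓ ⊤))) := by
        gcongr
        exact hτ.card_le_two_mul_card_inf _
      _ = 2 * (2 * Nat.card F) := by rw [inf_top_eq, inf_comm]
  have hVU : Nat.card U * 2 = Nat.card V := hidx2 ▸ card_mul_index U
  obtain ⟨c, hcF, hc1⟩ : ∃ c ∈ F, c ≠ 1 := F.bot_or_exists_ne_one.resolve_left fun h => by
    rw [h, card_bot] at hVF
    omega
  have hcV₀ : c ∈ FixedPoints.subgroup KR V := by
    rw [FixedPoints.mem_subgroup]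
    rintro ⟨k, hk⟩
    rw [Subgroup.smul_def, MulAut.smul_def]
    exact eq_of_card_le_two hF2 (apply_mem_inf_ker_displacement hR hσR hσ hτR hτ hne (hKR hk) hcF)
      hcF ((MulEquiv.map_ne_one_iff k).mpr hc1) hc1
  have hc : c ∈ FixedPoints.subgroup KR V ⊓ σ.displacement.ker := ⟨hcV₀, hcF.1⟩
  rw [hσV₀, mem_bot] at hc
  exact hc1 hc

theorem sup_closure_transvectionCenters_eq_top {KR : Subgroup (MulAut V)} (hKR : KR ≤ R)
    (hσR : σ ∈ R) (hσ : IsTransvection σ u)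
    (hirr : ∀ X : Subgroup V, FixedPoints.subgroup KR V ≤ X → (∀ k ∈ KR, ∀ x ∈ X, k x ∈ X) →
      X = FixedPoints.subgroup KR V ∨ X = ⊤)
    (hσV₀ : FixedPoints.subgroup KR V ⊓ σ.displacement.ker = ⊥) :
    FixedPoints.subgroup KR V ⊔ closure (transvectionCenters R) = ⊤ := by
  have huU : u ∈ closure (transvectionCenters R) := subset_closure ⟨σ, hσR, hσ⟩
  refine (hirr _ le_sup_left fun k hk x hx => ?_).resolve_left fun h => hσ.center_ne_one ?_
  · obtain ⟨y, hy, z, hz, rfl⟩ := mem_sup.mp hx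
    have hky : k y = y := (FixedPoints.mem_subgroup KR V y).mp hy ⟨k, hk⟩
    rw [map_mul, hky]
    exact mul_mem_sup hy (apply_mem_closure_transvectionCenters (hKR hk) hz)
  · have hu : u ∈ FixedPoints.subgroup KR V ⊓ σ.displacement.ker :=
      ⟨h ▸ mem_sup_right huU, mem_ker_displacement.mpr hσ.apply_center⟩
    rwa [hσV₀, mem_bot] at hu

theorem index_le_two_of_sup_eq_top [Finite V] {V₀ U : Subgroup V} (hσ : IsTransvection σ u)
    (hsup : V₀ ⊔ U = ⊤) (hσV₀ : V₀ ⊓ σ.displacement.ker = ⊥) : U.index ≤ 2 := by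
  have hV₀2 : Nat.card V₀ ≤ 2 := by
    simpa [inf_comm, hσV₀] using hσ.card_le_two_mul_card_inf V₀
  rw [← relIndex_top_right, ← hsup, relIndex_sup_right]
  exact (Nat.le_of_dvd Nat.card_pos (relIndex_dvd_card _ _)).trans hV₀2

theorem card_eq_four_of_isTransvection [Finite V] {KR : Subgroup (MulAut V)}
    (hR : ¬ 4 ∣ Nat.card R) (hKR : KR ≤ R) (hσR : σ ∈ R) (hσ : IsTransvection σ u)
    (hV₀ : FixedPoints.subgroup KR V ≠ ⊤)
    (hirr : ∀ X : Subgroup V, FixedPoints.subgroup KR V ≤ X → (∀ k ∈ KR, ∀ x ∈ X, k x ∈ X) →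
      X = FixedPoints.subgroup KR V ∨ X = ⊤)
    (hσV₀ : FixedPoints.subgroup KR V ⊓ σ.displacement.ker = ⊥) :
    Nat.card V = 4 := by
  set U := closure (transvectionCenters R)
  have hidx : U.index ≤ 2 := index_le_two_of_sup_eq_top hσ
    (sup_closure_transvectionCenters_eq_top hKR hσR hσ hirr hσV₀) hσV₀
  have hle : Nat.card V ≤ 4 := by
    rcases em (∃ τ ∈ R, ∃ x, IsTransvection τ x ∧ σ ≠ τ) with ⟨τ, hτR, x, hτ, hne⟩ | h
    · have hU : U = ⊤ := closure_transvectionCenters_eq_top hR hKR hσR hσ hτR hτ hne hσV₀ hidx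
      calc Nat.card V = Nat.card U := by rw [hU, card_top]
        _ ≤ 2 * Nat.card ↥(σ.displacement.ker ⊓ U) := hσ.card_le_two_mul_card_inf U
        _ ≤ 2 * 2 := by
          gcongr
          exact card_le_two_of_forall_eq_one_or_eq fun w hw =>
            eq_one_or_eq_of_mem_closure_of_apply_eq hR hσR hσ hw.2 (mem_ker_displacement.mp hw.1)
    · have hU2 : Nat.card U ≤ 2 := card_le_two_of_forall_eq_one_or_eq fun w hw =>
        (eq_one_or_mem_transvectionCenters_of_mem_closure hR hw).imp_right fun ⟨τ, hτR, hτ⟩ => by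
          obtain rfl : σ = τ := by_contra fun hne => h ⟨τ, hτR, w, hτ, hne⟩
          exact (hσ.unique hτ).symm
      rw [← card_mul_index U]
      exact Nat.mul_le_mul hU2 hidx
  have h2 : 2 ∣ Nat.card V := by
    have hu2 : u ^ 2 = 1 := by rw [sq, hσ.mul_self_center]
    exact orderOf_eq_prime hu2 hσ.center_ne_one ▸ orderOf_dvd_natCard u
  have h3 := two_lt_card_of_fixedPoints_ne_top hV₀
  omega

end MulAut

section RelCenter

variable {G : Type*} [Group G]

instance (T : Subgroup G) : CommGroup (relCenter T) :=
  { (inferInstance : Group (relCenter T)) with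
    mul_comm := fun a b => Subtype.ext (mem_centralizer_iff.mp b.2.2 a a.2.1) }

theorem le_centralizer_relCenter (T : Subgroup G) : T ≤ centralizer (relCenter T : Set G) :=
  le_centralizer_iff.mp inf_le_right

theorem normalizer_le_normalizer_relCenter (T : Subgroup G) :
    normalizer (T : Set G) ≤ normalizer (relCenter T : Set G) := by
  rw [le_normalizer_iff]
  intro g hg z hz
  have hgT : ∀ x, x ∈ T ↔ g * x * g⁻¹ ∈ T := mem_normalizer_iff.mp hg
  refine ⟨(hgT z).mp hz.1, mem_centralizer_iff.mpr fun t ht => ?_⟩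
  have ht' : g⁻¹ * t * g ∈ T := (hgT _).mpr (by simpa [mul_assoc] using ht)
  have hc := mem_centralizer_iff.mp hz.2 _ ht'
  calc t * (g * z * g⁻¹) = g * ((g⁻¹ * t * g) * z) * g⁻¹ := by group
    _ = g * (z * (g⁻¹ * t * g)) * g⁻¹ := by rw [hc]
    _ = g * z * g⁻¹ * t := by group

theorem le_normalizer_relCenter_of_relIndex_eq_two {S T : Subgroup G} (hTS : T ≤ S)
    (h : T.relIndex S = 2) : S ≤ normalizer (relCenter T : Set G) :=
  (le_normalizer_of_relIndex_eq_two hTS h).trans (normalizer_le_normalizer_relCenter T)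

variable (S : Sylow 2 G) {T : Subgroup G}

theorem not_four_dvd_card_range_normalizerMonoidHom [Finite G] (hTS : T ≤ S)
    (h : T.relIndex S = 2) :
    ¬ 4 ∣ Nat.card (relCenter T).normalizerMonoidHom.range := by
  set N := normalizer (relCenter T : Set G)
  have hSN : (S : Subgroup G) ≤ N := le_normalizer_relCenter_of_relIndex_eq_two hTS h
  have hTker : T.subgroupOf N ≤ (relCenter T).normalizerMonoidHom.ker := by
    rw [normalizerMonoidHom_ker]
    exact fun x hx => mem_subgroupOf.mpr (le_centralizer_relCenter T (mem_subgroupOf.mp hx))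
  have hodd : ¬ 2 ∣ ((S : Subgroup G).subgroupOf N).index := by
    simpa using (S.subtype hSN).not_dvd_index
  have hidx : (T.subgroupOf N).index = 2 * ((S : Subgroup G).subgroupOf N).index := by
    rw [← relIndex_mul_index (K := (S : Subgroup G).subgroupOf N) fun _ hx => hTS hx,
      relIndex_subgroupOf hSN, h]
  rw [← index_ker]
  intro h4
  have := h4.trans (index_dvd_of_le hTker)
  omega

theorem exists_isTransvection_normalizerMonoidHom (hTS : T ≤ S) (h1a : T.relIndex S = 2)
    (h1b : (centralizer (S : Set G)).relIndex (relCenter T) = 2) :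
    ∃ σ ∈ (relCenter T).normalizerMonoidHom.range, ∃ u, σ.IsTransvection u ∧
      σ.displacement.ker = (centralizer (S : Set G)).subgroupOf (relCenter T) := by
  have hSN := le_normalizer_relCenter_of_relIndex_eq_two hTS h1a
  have hT2 : (T.subgroupOf S).index = 2 := h1a
  obtain ⟨⟨s, hsS⟩, hs⟩ : ∃ s : (S : Subgroup G), s ∉ T.subgroupOf S := by
    by_contra! hall
    rw [(eq_top_iff' _).mpr hall, index_top] at hT2
    omega
  set σ := (relCenter T).normalizerMonoidHom ⟨s, hSN hsS⟩
  have hT : ∀ t ∈ T, ∀ z : relCenter T, t * z = z * t := fun t ht z =>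
    mem_centralizer_iff.mp z.2.2 t ht
  have hker : σ.displacement.ker = (centralizer (S : Set G)).subgroupOf (relCenter T) := by
    ext z
    rw [MulAut.mem_ker_displacement, mem_subgroupOf, mem_centralizer_iff, ← Subtype.coe_inj,
      normalizerMonoidHom_apply_apply_coe, mul_inv_eq_iff_eq_mul]
    refine ⟨fun hsz g hg => ?_, fun hz => hz s hsS⟩
    by_cases hgT : g ∈ T
    · exact hT g hgT z
    have hsg : s⁻¹ * g ∈ T := by
      have := (mul_mem_iff_of_index_two hT2 (a := ⟨s, hsS⟩⁻¹) (b := ⟨g, hg⟩)).mpr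
        (by simpa [inv_mem_iff, mem_subgroupOf, hgT] using hs)
      simpa using mem_subgroupOf.mp this
    calc g * z = s * ((s⁻¹ * g) * z) := by group
      _ = s * (z * (s⁻¹ * g)) := by rw [hT _ hsg z]
      _ = s * z * (s⁻¹ * g) := by group
      _ = z * s * (s⁻¹ * g) := by rw [← hsz]
      _ = z * g := by group
  have hσ2 : σ ^ 2 = 1 := by
    rw [← map_pow, ← MonoidHom.mem_ker, normalizerMonoidHom_ker, mem_subgroupOf]
    exact le_centralizer_relCenter T
      (by simpa using mem_subgroupOf.mp (sq_mem_of_index_two hT2 ⟨s, hsS⟩))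
  obtain ⟨u, hu⟩ := MulAut.exists_isTransvection_of_index_eq_two hσ2 (by rw [hker]; exact h1b)
  exact ⟨σ, ⟨_, rfl⟩, u, hu, hker⟩

end RelCenter

theorem card_center_eq_four_general
    {G : Type*} [Group G] [Finite G] (S : Sylow 2 G) (T K : Subgroup G)
    (hTS : T ≤ (S : Subgroup G)) (hK : K ≤ Subgroup.normalizer (T : Set G))
    (h1a : T.relIndex (S : Subgroup G) = 2)
    (h1b : (Subgroup.centralizer ((S : Subgroup G) : Set G)).relIndex (relCenter T) = 2)
    (h2b : ¬ relCenter T ≤ Subgroup.centralizer (K : Set G))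
    (h2c : ∀ X : Subgroup G, X ≤ relCenter T →
      relCenter T ⊓ Subgroup.centralizer (K : Set G) ≤ X →
      (∀ k ∈ K, ∀ x ∈ X, k * x * k⁻¹ ∈ X) →
      X = relCenter T ⊓ Subgroup.centralizer (K : Set G) ∨ X = relCenter T)
    (h3 : (relCenter T ⊓ Subgroup.centralizer (K : Set G)) ⊓
      (relCenter T ⊓ Subgroup.centralizer ((S : Subgroup G) : Set G)) = ⊥) :
    Nat.card ↥(relCenter T) = 4 := by
  set Z := relCenter T
  have hKN : K ≤ normalizer (Z : Set G) := hK.trans (normalizer_le_normalizer_relCenter T)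
  have hV₀ := fixedPoints_range_normalizerMonoidHom_comp hKN
  obtain ⟨σ, hσR, u, hσ, hσker⟩ := exists_isTransvection_normalizerMonoidHom S hTS h1a h1b
  refine MulAut.card_eq_four_of_isTransvection
    (KR := (Z.normalizerMonoidHom.comp (inclusion hKN)).range)
    (not_four_dvd_card_range_normalizerMonoidHom S hTS h1a) (by rintro _ ⟨k, rfl⟩; exact ⟨_, rfl⟩)
    hσR hσ ?_ ?_ ?_ <;> rw [hV₀]
  · rwa [Ne, subgroupOf_eq_top]
  · intro X hX hinv
    have hXZ : X = (X.map Z.subtype).subgroupOf Z :=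
      (comap_map_eq_self_of_injective Z.subtype_injective X).symm
    have hmap := h2c (X.map Z.subtype) (map_subtype_le X)
      (by simpa [subgroupOf_map_subtype, inf_comm] using map_mono (f := Z.subtype) hX)
      (conj_mem_map_subtype hKN hinv)
    rcases hmap with h | h <;> rw [hXZ, h] <;> simp [inf_subgroupOf_left, subgroupOf_self]
  · rw [hσker, eq_bot_iff]
    rintro z ⟨hzK, hzS⟩
    have hz : (z : G) ∈ (⊥ : Subgroup G) := h3 ▸ ⟨⟨z.2, hzK⟩, ⟨z.2, hzS⟩⟩
    exact mem_bot.mpr (Subtype.ext (mem_bot.mp hz))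

/-- Let `G` be a finite group, `S` a Sylow `2`-subgroup, `T ≤ S`,
`K ≤ N_G(T)` and `Z = Z(T)`.  Assume (i) `|S : T| = 2` and `|Z : C_Z(S)| = 2`;
(ii) `|K|` is odd and `K` acts irreducibly on `Z/C_Z(K)`; (iii) `C_Z(K) ∩ C_Z(S) = 1`.
Then `|Z| = 4`. -/
theorem card_center_eq_four
    {G : Type*} [Group G] [Finite G] (S : Sylow 2 G) (T K : Subgroup G)
    (hTS : T ≤ (S : Subgroup G)) (hK : K ≤ Subgroup.normalizer (T : Set G))
    (h1a : T.relIndex (S : Subgroup G) = 2)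
    (h1b : (Subgroup.centralizer ((S : Subgroup G) : Set G)).relIndex (relCenter T) = 2)
    (h2a : Odd (Nat.card K))
    (h2b : ¬ relCenter T ≤ Subgroup.centralizer (K : Set G))
    (h2c : ∀ X : Subgroup G, X ≤ relCenter T →
      relCenter T ⊓ Subgroup.centralizer (K : Set G) ≤ X →
      (∀ k ∈ K, ∀ x ∈ X, k * x * k⁻¹ ∈ X) →
      X = relCenter T ⊓ Subgroup.centralizer (K : Set G) ∨ X = relCenter T)
    (h3 : (relCenter T ⊓ Subgroup.centralizer (K : Set G)) ⊓
      (relCenter T ⊓ Subgroup.centralizer ((S : Subgroup G) : Set G)) = ⊥) :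
    Nat.card ↥(relCenter T) = 4 :=
  card_center_eq_four_general S T K hTS hK h1a h1b h2b h2c h3
end

section
/- Let p be a prime and G a finite group. Let V ≤ W be elementary abelian normal p-subgroups of G with [V, J(G)] ≠ 1. Let A ∈ 𝒜(G) with [V, A] ≠ 1 be such that A·C_G(W) is minimal with respect to inclusion among the subgroups B·C_G(W) with B ∈ 𝒜(G) and [W, B] ≠ 1. Assume A is not an over-offender on V, i.e. |V : C_V(A)| ≥ |A : C_A(V)|. Then |W : C_W(A)| = |A : C_A(W)| = |V : C_V(A)| and W = V·C_W(A). -/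
/-- `𝒜(H)`: the set of elementary abelian `p`-subgroups of `H` of maximal order. -/
def maxElemAbIn (p : ℕ) {G : Type*} [Group G] (H : Subgroup G) : Set (Subgroup G) :=
  {A | A ≤ H ∧ IsElementaryAbelian p A ∧
    ∀ B : Subgroup G, B ≤ H → IsElementaryAbelian p B → Nat.card B ≤ Nat.card A}

/-- The Thompson subgroup `J(H)` of `H`, generated by all members of `𝒜(H)`. -/
def thompsonJ (p : ℕ) {G : Type*} [Group G] (H : Subgroup G) : Subgroup G :=
  sSup (maxElemAbIn p H)

/-!
Thompson replacement. Put `C = C_A(V)` and `D = C_W(C)`. Maximality of `A` forces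
`C_W(A) ≤ A`, hence `C ∩ D = C_W(A)`, and `B = C D` is elementary abelian with
`|B| = |C| |D : C_W(A)|`. As `A` is not an over-offender on `V`,
`|A| = |C| |A : C| ≤ |C| |V : C_V(A)| = |C| |V C_W(A) : C_W(A)| ≤ |B| ≤ |A|`,
so equality holds throughout: `B ∈ 𝒜(G)`, `D = V C_W(A)` and `|A : C_A(V)| = |V : C_V(A)|`.
Both `B` and `C_G(W)` centralize `V`, so if `[W, B] ≠ 1`, minimality would give
`A ≤ B C_G(W) ≤ C_G(V)`, contradicting `[V, A] ≠ 1`. Hence `W ≤ C_G(B) ≤ C_G(C)`, that is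
`W = D = V C_W(A)` and `C_A(W) = C_A(V)`, from which the index equalities follow.
-/

open Subgroup

namespace Subgroup

variable {G : Type*} [Group G]

theorem card_mul_relIndex_s6 {H K : Subgroup G} (h : H ≤ K) :
    Nat.card H * H.relIndex K = Nat.card K := by
  simpa only [relIndex_bot_left] using relIndex_mul_relIndex ⊥ H K bot_le h

theorem inf_relIndex_of_le {H K L : Subgroup G} (h : L ≤ K) :
    (K ⊓ H).relIndex L = H.relIndex L := by
  rw [← inf_relIndex_right (K ⊓ H) L, ← inf_relIndex_right H L, inf_assoc,
    inf_of_le_right (inf_le_right.trans h)]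

theorem relIndex_sup_right_of_le_normalizer {H K : Subgroup G}
    (h : K ≤ normalizer (H : Set G)) : H.relIndex (K ⊔ H) = H.relIndex K := by
  have : (H.subgroupOf (K ⊔ H)).Normal := normal_subgroupOf_sup_of_le_normalizer h
  have hsup : K.subgroupOf (K ⊔ H) ⊔ H.subgroupOf (K ⊔ H) = ⊤ := by
    rw [← subgroupOf_sup le_sup_left le_sup_right, subgroupOf_self]
  rw [← relIndex_subgroupOf (le_refl (K ⊔ H)), subgroupOf_self, ← hsup, relIndex_sup_right,
    relIndex_subgroupOf le_sup_left]

theorem eq_of_le_of_relIndex_eq [Finite G] {H K L : Subgroup G} (hHK : H ≤ K) (hKL : K ≤ L)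
    (h : H.relIndex K = H.relIndex L) : K = L := by
  have hmul := relIndex_mul_relIndex H K L hHK hKL
  rw [← h] at hmul
  exact le_antisymm hKL (relIndex_eq_one.mp
    ((Nat.mul_eq_left (H.subgroupOf K).index_ne_zero_of_finite).mp hmul))

end Subgroup

namespace IsElementaryAbelian

variable {G : Type*} [Group G] {p : ℕ} {H K : Subgroup G}

theorem iff_le_centralizer :
    IsElementaryAbelian p H ↔ H ≤ centralizer (H : Set G) ∧ ∀ x ∈ H, x ^ p = 1 := by
  simp only [IsElementaryAbelian, Subtype.ext_iff, coe_mul, SubgroupClass.coe_pow,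
    OneMemClass.coe_one, Subtype.forall]
  exact and_congr_left' ⟨fun h x hx y hy ↦ h y hy x hx, fun h x hx y hy ↦ h hy x hx⟩

theorem le_centralizer (h : IsElementaryAbelian p H) : H ≤ centralizer (H : Set G) :=
  (iff_le_centralizer.mp h).1

theorem pow_eq_one (h : IsElementaryAbelian p H) {x : G} (hx : x ∈ H) : x ^ p = 1 :=
  (iff_le_centralizer.mp h).2 x hx

theorem mono (h : IsElementaryAbelian p K) (hHK : H ≤ K) : IsElementaryAbelian p H :=
  iff_le_centralizer.mpr ⟨hHK.trans (h.le_centralizer.trans (centralizer_le hHK)),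
    fun _ hx ↦ h.pow_eq_one (hHK hx)⟩

theorem sup (hH : IsElementaryAbelian p H) (hK : IsElementaryAbelian p K)
    (hHK : K ≤ centralizer (H : Set G)) : IsElementaryAbelian p (H ⊔ K) := by
  refine iff_le_centralizer.mpr ⟨?_, fun x hx ↦ ?_⟩
  · exact sup_le (le_centralizer_iff.mpr (sup_le hH.le_centralizer hHK))
      (le_centralizer_iff.mpr (sup_le (le_centralizer_iff.mp hHK) hK.le_centralizer))
  · rw [← SetLike.mem_coe, coe_mul_of_right_le_normalizer_left H K
      (hHK.trans (centralizer_le_normalizer _))] at hx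
    obtain ⟨h, hh, k, hk, rfl⟩ := hx
    rw [Commute.mul_pow (hHK hk h hh), hH.pow_eq_one hh, hK.pow_eq_one hk, one_mul]

end IsElementaryAbelian

section Replacement

variable {G : Type*} [Group G] {p : ℕ} {A V W : Subgroup G}

theorem le_of_le_centralizer_of_mem_maxElemAbIn [Finite G] {X : Subgroup G}
    (hA : A ∈ maxElemAbIn p ⊤) (hX : IsElementaryAbelian p X)
    (hXA : X ≤ centralizer (A : Set G)) : X ≤ A := by
  obtain ⟨-, hAea, hAmax⟩ := hA
  have hsup : A = A ⊔ X := eq_of_le_of_card_ge le_sup_left (hAmax _ le_top (hAea.sup hX hXA))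
  exact le_sup_right.trans hsup.ge

def thompsonReplacement (A V W : Subgroup G) : Subgroup G :=
  A ⊓ centralizer (V : Set G) ⊔
    W ⊓ centralizer ((A ⊓ centralizer (V : Set G) : Subgroup G) : Set G)

theorem inf_centralizer_le_thompsonReplacement :
    A ⊓ centralizer (V : Set G) ≤ thompsonReplacement A V W :=
  le_sup_left

theorem IsElementaryAbelian.thompsonReplacement (hA : IsElementaryAbelian p A)
    (hW : IsElementaryAbelian p W) : IsElementaryAbelian p (thompsonReplacement A V W) :=
  (hA.mono inf_le_left).sup (hW.mono inf_le_left) inf_le_right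

theorem thompsonReplacement_sup_centralizer_le (hW : IsElementaryAbelian p W) :
    thompsonReplacement A V W ⊔ centralizer (W : Set G) ≤ A ⊔ centralizer (W : Set G) :=
  sup_le (sup_le (inf_le_left.trans le_sup_left)
    (inf_le_left.trans (hW.le_centralizer.trans le_sup_right))) le_sup_right

theorem thompsonReplacement_sup_centralizer_le_centralizer (hW : IsElementaryAbelian p W)
    (hVW : V ≤ W) :
    thompsonReplacement A V W ⊔ centralizer (W : Set G) ≤ centralizer (V : Set G) := by
  have hWV : centralizer (W : Set G) ≤ centralizer (V : Set G) := centralizer_le hVW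
  exact sup_le (sup_le inf_le_right (inf_le_left.trans (hW.le_centralizer.trans hWV))) hWV

theorem relIndex_sup_inf_centralizer (hW : IsElementaryAbelian p W) (hVW : V ≤ W) :
    (W ⊓ centralizer (A : Set G)).relIndex (V ⊔ (W ⊓ centralizer (A : Set G))) =
      (centralizer (A : Set G)).relIndex V := by
  rw [relIndex_sup_right_of_le_normalizer (hVW.trans (hW.le_centralizer.trans
    ((centralizer_le inf_le_left).trans (centralizer_le_normalizer _)))), inf_relIndex_of_le hVW]

theorem card_thompsonReplacement [Finite G] (hA : A ∈ maxElemAbIn p ⊤)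
    (hW : IsElementaryAbelian p W) (hVW : V ≤ W) :
    Nat.card (thompsonReplacement A V W) = Nat.card (A ⊓ centralizer (V : Set G) : Subgroup G) *
      (W ⊓ centralizer (A : Set G)).relIndex
        (W ⊓ centralizer ((A ⊓ centralizer (V : Set G) : Subgroup G) : Set G)) := by
  set C := A ⊓ centralizer (V : Set G)
  set D := W ⊓ centralizer (C : Set G)
  have hAab : A ≤ centralizer (A : Set G) := hA.2.1.le_centralizer
  have hFA : W ⊓ centralizer (A : Set G) ≤ A :=
    le_of_le_centralizer_of_mem_maxElemAbIn hA (hW.mono inf_le_left) inf_le_right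
  have hCD : C ⊓ D = W ⊓ centralizer (A : Set G) := by
    refine le_antisymm (le_inf (inf_le_right.trans inf_le_left)
      (inf_le_left.trans (inf_le_left.trans hAab))) ?_
    refine le_inf (le_inf hFA ?_) (le_inf inf_le_left ?_)
    · exact inf_le_left.trans (hW.le_centralizer.trans (centralizer_le hVW))
    · exact inf_le_right.trans (centralizer_le inf_le_left)
  rw [thompsonReplacement, ← card_mul_relIndex_s6 le_sup_left, sup_comm,
    relIndex_sup_right_of_le_normalizer (inf_le_right.trans (centralizer_le_normalizer _)),
    ← inf_relIndex_right, hCD]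

theorem thompsonReplacement_of_relIndex_le [Finite G] (hA : A ∈ maxElemAbIn p ⊤)
    (hW : IsElementaryAbelian p W) (hVW : V ≤ W)
    (hAV : (centralizer (V : Set G)).relIndex A ≤ (centralizer (A : Set G)).relIndex V) :
    Nat.card (thompsonReplacement A V W) = Nat.card A ∧
      W ⊓ centralizer (thompsonReplacement A V W : Set G) ≤
        V ⊔ (W ⊓ centralizer (A : Set G)) ∧
      (centralizer (V : Set G)).relIndex A = (centralizer (A : Set G)).relIndex V := by
  set C := A ⊓ centralizer (V : Set G)
  set D := W ⊓ centralizer (C : Set G)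
  set F := W ⊓ centralizer (A : Set G)
  have hFD : V ⊔ F ≤ D := sup_le (le_inf hVW (le_centralizer_iff.mp inf_le_right))
    (le_inf inf_le_left (inf_le_right.trans (centralizer_le inf_le_left)))
  have hAcard : Nat.card A = Nat.card C * (centralizer (V : Set G)).relIndex A := by
    rw [← card_mul_relIndex_s6 inf_le_left, inf_relIndex_left]
  have hVcover : F.relIndex (V ⊔ F) = (centralizer (A : Set G)).relIndex V :=
    relIndex_sup_inf_centralizer hW hVW
  have hcover_le : F.relIndex (V ⊔ F) ≤ F.relIndex D :=
    relIndex_le_of_le_right hFD (F.subgroupOf D).index_ne_zero_of_finite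
  have hBcard : Nat.card (thompsonReplacement A V W) = Nat.card C * F.relIndex D :=
    card_thompsonReplacement hA hW hVW
  have hBA : Nat.card (thompsonReplacement A V W) ≤ Nat.card A :=
    hA.2.2 _ le_top (hA.2.1.thompsonReplacement hW)
  rw [hBcard, hAcard] at hBA
  have hindex_le := Nat.le_of_mul_le_mul_left hBA Nat.card_pos
  refine ⟨?_, ?_, by omega⟩
  · rw [hBcard, hAcard]
    congr 1
    omega
  · rw [eq_of_le_of_relIndex_eq le_sup_right hFD (by omega)]
    exact le_inf inf_le_left
      (inf_le_right.trans (centralizer_le inf_centralizer_le_thompsonReplacement))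

end Replacement

theorem minimal_offender_cover_general
    {p : ℕ} {G : Type*} [Group G] [Finite G]
    (V W A : Subgroup G) (hVW : V ≤ W)
    (hWea : IsElementaryAbelian p W)
    (hA : A ∈ maxElemAbIn p (⊤ : Subgroup G)) (hVA : ⁅V, A⁆ ≠ ⊥)
    (hmin : ∀ B ∈ maxElemAbIn p (⊤ : Subgroup G), ⁅W, B⁆ ≠ ⊥ →
      B ⊔ Subgroup.centralizer (W : Set G) ≤ A ⊔ Subgroup.centralizer (W : Set G) →
      B ⊔ Subgroup.centralizer (W : Set G) = A ⊔ Subgroup.centralizer (W : Set G))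
    (hno : (Subgroup.centralizer ((V : Subgroup G) : Set G)).relIndex A ≤
      (Subgroup.centralizer ((A : Subgroup G) : Set G)).relIndex V) :
    (Subgroup.centralizer ((A : Subgroup G) : Set G)).relIndex W =
        (Subgroup.centralizer ((W : Subgroup G) : Set G)).relIndex A ∧
      (Subgroup.centralizer ((A : Subgroup G) : Set G)).relIndex W =
        (Subgroup.centralizer ((A : Subgroup G) : Set G)).relIndex V ∧
      W = V ⊔ (W ⊓ Subgroup.centralizer ((A : Subgroup G) : Set G)) := by
  set B := thompsonReplacement A V W
  obtain ⟨hBcard, hcover, hAV⟩ := thompsonReplacement_of_relIndex_le hA hWea hVW hno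
  have hB : B ∈ maxElemAbIn p ⊤ :=
    ⟨le_top, hA.2.1.thompsonReplacement hWea, fun X hX hXea ↦ hBcard ▸ hA.2.2 X hX hXea⟩
  have hWB : W ≤ centralizer (B : Set G) := by
    rw [← commutator_eq_bot_iff_le_centralizer]
    by_contra hWB
    have hBA := hmin B hB hWB (thompsonReplacement_sup_centralizer_le hWea)
    refine hVA (commutator_eq_bot_iff_le_centralizer.mpr (le_centralizer_iff.mp ?_))
    exact le_sup_left.trans (hBA ▸ thompsonReplacement_sup_centralizer_le_centralizer hWea hVW)
  have hW : W = V ⊔ (W ⊓ centralizer (A : Set G)) :=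
    le_antisymm ((le_inf le_rfl hWB).trans hcover) (sup_le hVW inf_le_left)
  have hWV : (centralizer (A : Set G)).relIndex W = (centralizer (A : Set G)).relIndex V := by
    rw [← inf_relIndex_left W, ← relIndex_sup_inf_centralizer hWea hVW, ← hW]
  have hAW : (centralizer (W : Set G)).relIndex A = (centralizer (V : Set G)).relIndex A := by
    rw [← inf_relIndex_left A, ← inf_relIndex_left A (centralizer (V : Set G) : Subgroup G)]
    refine congrArg (·.relIndex A) (le_antisymm (inf_le_inf_left _ (centralizer_le hVW))
      (le_inf inf_le_left (le_centralizer_iff.mp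
        (hWB.trans (centralizer_le inf_centralizer_le_thompsonReplacement)))))
  exact ⟨hWV.trans (hAV.symm.trans hAW.symm), hWV, hW⟩

/-- Let `V ≤ W` be elementary abelian normal `p`-subgroups of a finite group
`G` with `[V, J(G)] ≠ 1`.  Let `A ∈ 𝒜(G)` with `[V, A] ≠ 1` be such that `A·C_G(W)` is minimal
(with respect to inclusion) among the subgroups `B·C_G(W)` with `B ∈ 𝒜(G)` and `[W, B] ≠ 1`.
If `A` is not an over-offender on `V` (i.e. `|V : C_V(A)| ≥ |A : C_A(V)|`), then
`|W : C_W(A)| = |A : C_A(W)| = |V : C_V(A)|` and `W = V·C_W(A)`. -/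
theorem minimal_offender_cover
    {p : ℕ} (hp : p.Prime) {G : Type*} [Group G] [Finite G]
    (V W A : Subgroup G) (hVW : V ≤ W) (hV : V.Normal) (hW : W.Normal)
    (hVea : IsElementaryAbelian p V) (hWea : IsElementaryAbelian p W)
    (hVJ : ⁅V, thompsonJ p (⊤ : Subgroup G)⁆ ≠ ⊥)
    (hA : A ∈ maxElemAbIn p (⊤ : Subgroup G)) (hVA : ⁅V, A⁆ ≠ ⊥)
    (hmin : ∀ B ∈ maxElemAbIn p (⊤ : Subgroup G), ⁅W, B⁆ ≠ ⊥ →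
      B ⊔ Subgroup.centralizer (W : Set G) ≤ A ⊔ Subgroup.centralizer (W : Set G) →
      B ⊔ Subgroup.centralizer (W : Set G) = A ⊔ Subgroup.centralizer (W : Set G))
    (hno : (Subgroup.centralizer ((V : Subgroup G) : Set G)).relIndex A ≤
      (Subgroup.centralizer ((A : Subgroup G) : Set G)).relIndex V) :
    (Subgroup.centralizer ((A : Subgroup G) : Set G)).relIndex W =
        (Subgroup.centralizer ((W : Subgroup G) : Set G)).relIndex A ∧
      (Subgroup.centralizer ((A : Subgroup G) : Set G)).relIndex W =
        (Subgroup.centralizer ((A : Subgroup G) : Set G)).relIndex V ∧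
      W = V ⊔ (W ⊓ Subgroup.centralizer ((A : Subgroup G) : Set G)) :=
  minimal_offender_cover_general V W A hVW hWea hA hVA hmin hno
end

section
/- Let p be a prime and G a finite group which is minimal parabolic with respect to p, with Sylow p-subgroup T. Then for every normal subgroup N of G, either N ∩ T is normal in G, or the quotient G/N is a p-group. -/
/-!
By Frattini's argument `G = N_G(N ∩ T) N`, since `N ∩ T` is a Sylow subgroup of `N`. Both
`N_G(N ∩ T)` and `N T` contain `T`, and their join is `G`; as all proper subgroups containing `T`
lie in the unique maximal one, one of them is `G`. Either `N ∩ T ⊴ G`, or `G = N T` and `G / N`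
is an image of `T`.
-/

/-- A finite group `G` with Sylow `p`-subgroup `T` is *minimal parabolic* (with respect to `p`)
if `T` is not normal in `G` and there is a unique maximal subgroup of `G` containing `T`. -/
def IsMinimalParabolic (p : ℕ) (G : Type*) [Group G] (T : Sylow p G) : Prop :=
  ¬ (T : Subgroup G).Normal ∧ ∃! M : Subgroup G, IsCoatom M ∧ (T : Subgroup G) ≤ M

open Subgroup

theorem Subgroup.relIndex_eq_relIndex_sup_of_normal {G : Type*} [Group G] (H K : Subgroup G)
    [K.Normal] [K.IsFiniteRelIndex H] : H.relIndex K = H.relIndex (H ⊔ K) := by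
  have key := relIndex_inf_mul_relIndex H K (H ⊔ K)
  rw [inf_of_le_left le_sup_right, relIndex_sup_right,
    ← relIndex_mul_relIndex (H ⊓ K) H (H ⊔ K) inf_le_left le_sup_left, inf_relIndex_left,
    mul_comm (K.relIndex H)] at key
  exact Nat.eq_of_mul_eq_mul_right (Nat.pos_of_ne_zero relIndex_ne_zero) key

theorem Sylow.not_dvd_relIndex_of_normal {p : ℕ} [Fact p.Prime] {G : Type*} [Group G] [Finite G]
    (P : Sylow p G) (N : Subgroup G) [N.Normal] : ¬ p ∣ (P : Subgroup G).relIndex N := by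
  have : N.IsFiniteRelIndex P := isFiniteRelIndex_of_finiteIndex
  rw [relIndex_eq_relIndex_sup_of_normal]
  exact fun h ↦ P.not_dvd_index (h.trans (relIndex_dvd_index_of_le le_sup_left))

def Sylow.subgroupOfNormal {p : ℕ} [Fact p.Prime] {G : Type*} [Group G] [Finite G]
    (P : Sylow p G) (N : Subgroup G) [N.Normal] : Sylow p N :=
  (P.isPGroup'.comap_of_injective N.subtype N.subtype_injective).toSylow (P.not_dvd_relIndex_of_normal N)

theorem Sylow.normalizer_inf_sup_eq_top {p : ℕ} [Fact p.Prime] {G : Type*} [Group G] [Finite G]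
    (P : Sylow p G) (N : Subgroup G) [N.Normal] :
    normalizer ((N ⊓ P : Subgroup G) : Set G) ⊔ N = ⊤ := by
  rw [← normalizer_sup_eq_top (P.subgroupOfNormal N), inf_comm]
  exact congrArg (fun H : Subgroup G ↦ normalizer (H : Set G) ⊔ N)
    (subgroupOf_map_subtype (P : Subgroup G) N).symm

theorem Subgroup.le_normalizer_normal_inf {G : Type*} [Group G] (H N : Subgroup G) [N.Normal] :
    H ≤ normalizer ((N ⊓ H : Subgroup G) : Set G) :=
  (le_inf le_normalizer_of_normal le_normalizer).trans inf_normalizer_le_normalizer_inf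

theorem IsPGroup.quotient_of_sup_eq_top {p : ℕ} {G : Type*} [Group G] {P N : Subgroup G}
    [N.Normal] (hP : IsPGroup p P) (hNP : N ⊔ P = ⊤) : IsPGroup p (G ⧸ N) := by
  have hmap : Subgroup.map (QuotientGroup.mk' N) P = ⊤ := by
    rw [← bot_sup_eq (Subgroup.map _ P), ← QuotientGroup.map_mk'_self N, ← Subgroup.map_sup, hNP,
      map_top_of_surjective _ (QuotientGroup.mk'_surjective N)]
  exact (hmap ▸ hP.map (QuotientGroup.mk' N)).of_equiv topEquiv

theorem sup_ne_top_of_existsUnique_isCoatom {α : Type*} [Lattice α] [OrderTop α] [IsCoatomic α]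
    {a b c : α} (h : ∃! m, IsCoatom m ∧ a ≤ m) (hab : a ≤ b) (hac : a ≤ c) (hb : b ≠ ⊤)
    (hc : c ≠ ⊤) : b ⊔ c ≠ ⊤ := by
  obtain ⟨m, ⟨hm, -⟩, hm_unique⟩ := h
  have le_m : ∀ x, x ≠ ⊤ → a ≤ x → x ≤ m := fun x hx hax ↦ by
    obtain ⟨mx, hmx, hxmx⟩ := (eq_top_or_exists_le_coatom x).resolve_left hx
    exact hm_unique mx ⟨hmx, hax.trans hxmx⟩ ▸ hxmx
  exact ne_top_of_le_ne_top hm.1 (sup_le (le_m b hb hab) (le_m c hc hac))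

/-- If `G` is minimal parabolic with respect to `p`, with Sylow `p`-subgroup
`T`, then for every normal subgroup `N` of `G`, either `N ∩ T` is normal in `G` or `G/N` is a
`p`-group. -/
theorem normal_inter_sylow_or_pGroup_quotient_of_minimalParabolic
    {p : ℕ} (hp : p.Prime) {G : Type*} [Group G] [Finite G] (T : Sylow p G)
    (hmin : IsMinimalParabolic p G T)
    (N : Subgroup G) (hN : N.Normal) :
    (N ⊓ (T : Subgroup G)).Normal ∨ IsPGroup p (G ⧸ N) := by
  have : Fact p.Prime := ⟨hp⟩
  let NT : Subgroup G := N ⊓ T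
  by_cases hnorm : normalizer (NT : Set G) = ⊤
  · exact .inl (normalizer_eq_top_iff.mp hnorm)
  right
  have hNT : N ⊔ (T : Subgroup G) = ⊤ := by
    by_contra hNT
    refine sup_ne_top_of_existsUnique_isCoatom hmin.2 ((T : Subgroup G).le_normalizer_normal_inf N)
      le_sup_right hnorm hNT (top_le_iff.mp ?_)
    calc ⊤ = normalizer (NT : Set G) ⊔ N := (T.normalizer_inf_sup_eq_top N).symm
      _ ≤ normalizer (NT : Set G) ⊔ (N ⊔ T) := sup_le_sup_left le_sup_left _
  exact T.isPGroup'.quotient_of_sup_eq_top hNT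
end

section
/- Let p be a prime, G a finite group, T a Sylow p-subgroup of G, and H a subgroup with N_G(T) ≤ H < G. Let P be a subgroup of G which is minimal with respect to inclusion among subgroups satisfying T ≤ P and P not contained in H. Then P is minimal parabolic with respect to p (with Sylow p-subgroup T), and H ∩ P is the unique maximal subgroup of P containing T. -/
/-! If `T` were normal in `P`, then `P ≤ N_G(T) ≤ H`. Viewing subgroups of `P` as subgroups
of `G`, minimality of `P` says that every subgroup of `P` containing `T` but not contained in
`H ∩ P` is all of `P`; in any order with a top element such a dichotomy makes `H ∩ P` the unique
coatom above `T`. -/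

section UniqueCoatom

variable {α : Type*} [PartialOrder α] [OrderTop α] {a b : α}

theorem isCoatom_of_forall_not_le_eq_top (hab : a ≤ b) (hb : b ≠ ⊤)
    (h : ∀ m, a ≤ m → ¬ m ≤ b → m = ⊤) : IsCoatom b :=
  ⟨hb, fun m hbm => h m (hab.trans hbm.le) hbm.not_ge⟩

theorem eq_of_isCoatom_of_forall_not_le_eq_top (hb : b ≠ ⊤)
    (h : ∀ m, a ≤ m → ¬ m ≤ b → m = ⊤) {m : α} (hm : IsCoatom m) (ham : a ≤ m) : m = b := by
  by_cases hmb : m ≤ b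
  · exact hmb.eq_or_lt.resolve_right fun hlt => hb (hm.2 b hlt)
  · exact absurd (h m ham hmb) hm.1

end UniqueCoatom

namespace Subgroup

variable {G : Type*} [Group G]

theorem eq_top_of_minimal_not_le {K L P : Subgroup G} (hKP : K ≤ P)
    (hmin : ∀ P' : Subgroup G, K ≤ P' → ¬ P' ≤ L → P' ≤ P → P' = P) {M : Subgroup P}
    (hKM : K.subgroupOf P ≤ M) (hML : ¬ M ≤ L.subgroupOf P) : M = ⊤ := by
  have hKM' : K ≤ M.map P.subtype := by
    simpa only [map_subgroupOf_eq_of_le hKP] using map_mono (f := P.subtype) hKM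
  have hML' : ¬ M.map P.subtype ≤ L := by rwa [map_le_iff_le_comap]
  have hMP : M.map P.subtype = P := hmin _ hKM' hML' (map_subtype_le M)
  rw [← comap_map_eq_self_of_injective P.subtype_injective M, hMP]
  exact subgroupOf_self P

end Subgroup

theorem minimalParabolic_of_minimal_not_le_general
    {p : ℕ} {G : Type*} [Group G] (T : Sylow p G)
    (H P : Subgroup G)
    (hNH : Subgroup.normalizer ((T : Subgroup G) : Set G) ≤ H)
    (hTP : (T : Subgroup G) ≤ P) (hPH : ¬ P ≤ H)
    (hminP : ∀ P' : Subgroup G, (T : Subgroup G) ≤ P' → ¬ P' ≤ H → P' ≤ P → P' = P) :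
    ¬ ((T : Subgroup G).subgroupOf P).Normal ∧
      IsCoatom ((H ⊓ P).subgroupOf P) ∧
      (T : Subgroup G).subgroupOf P ≤ (H ⊓ P).subgroupOf P ∧
      ∀ M : Subgroup ↥P, IsCoatom M → (T : Subgroup G).subgroupOf P ≤ M →
        M = (H ⊓ P).subgroupOf P := by
  rw [Subgroup.inf_subgroupOf_right]
  have hTH : (T : Subgroup G) ≤ H := Subgroup.le_normalizer.trans hNH
  have hTle : (T : Subgroup G).subgroupOf P ≤ H.subgroupOf P := Subgroup.subgroupOf_mono _ hTH
  have hne : H.subgroupOf P ≠ ⊤ := by rwa [Ne, Subgroup.subgroupOf_eq_top]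
  have hdich := fun M => Subgroup.eq_top_of_minimal_not_le (M := M) hTP hminP
  refine ⟨fun hN => hPH ((Subgroup.le_normalizer_of_normal_subgroupOf hTP).trans hNH),
    isCoatom_of_forall_not_le_eq_top hTle hne hdich, hTle,
    fun M hM hTM => eq_of_isCoatom_of_forall_not_le_eq_top hne hdich hM hTM⟩

/-- Let `p` be a prime, `G` a finite group, `T` a Sylow `p`-subgroup of `G`,
and `H` a subgroup with `N_G(T) ≤ H < G`.  Let `P` be minimal (with respect to inclusion) among
the subgroups of `G` satisfying `T ≤ P` and `P ≰ H`.  Then `P` is minimal parabolic with respect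
to `p` (with Sylow `p`-subgroup `T`): `T` is not normal in `P` and `H ∩ P` is the unique maximal
subgroup of `P` containing `T`. -/
theorem minimalParabolic_of_minimal_not_le
    {p : ℕ} (hp : p.Prime) {G : Type*} [Group G] [Finite G] (T : Sylow p G)
    (H P : Subgroup G)
    (hNH : Subgroup.normalizer ((T : Subgroup G) : Set G) ≤ H) (hHG : H < ⊤)
    (hTP : (T : Subgroup G) ≤ P) (hPH : ¬ P ≤ H)
    (hminP : ∀ P' : Subgroup G, (T : Subgroup G) ≤ P' → ¬ P' ≤ H → P' ≤ P → P' = P) :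
    ¬ ((T : Subgroup G).subgroupOf P).Normal ∧
      IsCoatom ((H ⊓ P).subgroupOf P) ∧
      (T : Subgroup G).subgroupOf P ≤ (H ⊓ P).subgroupOf P ∧
      ∀ M : Subgroup ↥P, IsCoatom M → (T : Subgroup G).subgroupOf P ≤ M →
        M = (H ⊓ P).subgroupOf P :=
  minimalParabolic_of_minimal_not_le_general T H P hNH hTP hPH hminP
end

section
/- Let p be a prime, S a finite p-group, and Q a subgroup of S such that J(S) is not contained in Q. Then J(N_S(J(Q))) is not contained in Q. -/
/-!
Let `N = N_S(J(Q))` and suppose `J(N) ≤ Q`. Since `Q ≤ N`, the members of `𝒜(N)` lie in `Q`,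
which forces `𝒜(N) = 𝒜(Q)` and hence `J(N) = J(Q)`. The Thompson subgroup is transported by
isomorphisms, so every element normalizing `H` normalizes `J(H)`; thus
`N_S(N) ≤ N_S(J(N)) = N`. A self-normalizing subgroup of a nilpotent group is the whole group, so
`N = S` and `J(S) = J(N) ≤ Q`.
-/

open Subgroup

section Thompson

variable {p : ℕ} {G G' : Type*} [Group G] [Group G']

theorem IsElementaryAbelian.map {A : Subgroup G} (hA : IsElementaryAbelian p A) (f : G →* G') :
    IsElementaryAbelian p (A.map f) := by
  constructor
  · rintro ⟨_, a, ha, rfl⟩ ⟨_, b, hb, rfl⟩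
    exact Subtype.ext (by simpa using congrArg (f ∘ Subtype.val) (hA.1 ⟨a, ha⟩ ⟨b, hb⟩))
  · rintro ⟨_, a, ha, rfl⟩
    exact Subtype.ext (by simpa using congrArg (f ∘ Subtype.val) (hA.2 ⟨a, ha⟩))

theorem map_mem_maxElemAbIn {H A : Subgroup G} (e : G ≃* G') (hA : A ∈ maxElemAbIn p H) :
    A.map (e : G →* G') ∈ maxElemAbIn p (H.map (e : G →* G')) := by
  obtain ⟨hAH, hAe, hAmax⟩ := hA
  refine ⟨map_mono hAH, hAe.map _, fun B hB hBe => ?_⟩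
  have hBH : B.map (e.symm : G' →* G) ≤ H := by
    rwa [map_le_iff_le_comap, ← map_equiv_eq_comap_symm]
  calc Nat.card B = Nat.card (B.map (e.symm : G' →* G)) :=
        (card_map_of_injective e.symm.injective).symm
    _ ≤ Nat.card A := hAmax _ hBH (hBe.map _)
    _ = Nat.card (A.map (e : G →* G')) := (card_map_of_injective e.injective).symm

theorem map_thompsonJ_le (e : G ≃* G') (H : Subgroup G) :
    (thompsonJ p H).map (e : G →* G') ≤ thompsonJ p (H.map (e : G →* G')) := by
  rw [thompsonJ, map_le_iff_le_comap]
  exact sSup_le fun A hA => map_le_iff_le_comap.1 (le_sSup (map_mem_maxElemAbIn e hA))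

theorem map_thompsonJ (e : G ≃* G') (H : Subgroup G) :
    (thompsonJ p H).map (e : G →* G') = thompsonJ p (H.map (e : G →* G')) := by
  refine le_antisymm (map_thompsonJ_le e H) ?_
  have h := map_thompsonJ_le (p := p) e.symm (H.map (e : G →* G'))
  rwa [(map_symm_eq_iff_map_eq _).2 rfl, map_le_iff_le_comap, ← map_equiv_eq_comap_symm] at h

theorem normalizer_le_normalizer_thompsonJ (p : ℕ) (H : Subgroup G) :
    normalizer (H : Set G) ≤ normalizer (thompsonJ p H : Set G) := fun g hg => by
  rw [mem_normalizer_iff_map_conj_eq] at hg ⊢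
  rw [map_thompsonJ, hg]

theorem maxElemAbIn_nonempty [Finite G] (p : ℕ) (H : Subgroup G) :
    (maxElemAbIn p H).Nonempty := by
  have hbot : (⊥ : Subgroup G) ≤ H ∧ IsElementaryAbelian p (⊥ : Subgroup G) :=
    ⟨bot_le, fun _ _ => Subsingleton.elim _ _, fun _ => Subsingleton.elim _ _⟩
  obtain ⟨A, hA, hAmax⟩ := Set.exists_max_image
    {A : Subgroup G | A ≤ H ∧ IsElementaryAbelian p A} (fun A => Nat.card A) (Set.toFinite _)
    ⟨⊥, hbot⟩
  exact ⟨A, hA.1, hA.2, fun B hB hBe => hAmax B ⟨hB, hBe⟩⟩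

theorem maxElemAbIn_eq_of_le_of_thompsonJ_le [Finite G] {H K : Subgroup G} (hHK : H ≤ K)
    (hJ : thompsonJ p K ≤ H) : maxElemAbIn p K = maxElemAbIn p H := by
  have hKH : maxElemAbIn p K ⊆ maxElemAbIn p H := fun A hA =>
    ⟨(le_sSup hA).trans hJ, hA.2.1, fun B hB hBe => hA.2.2 B (hB.trans hHK) hBe⟩
  refine hKH.antisymm fun A hA => ⟨hA.1.trans hHK, hA.2.1, fun B hB hBe => ?_⟩
  obtain ⟨A₀, hA₀⟩ := maxElemAbIn_nonempty p K
  calc Nat.card B ≤ Nat.card A₀ := hA₀.2.2 B hB hBe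
    _ ≤ Nat.card A := hA.2.2 A₀ (hKH hA₀).1 hA₀.2.1

theorem thompsonJ_eq_of_le_of_thompsonJ_le [Finite G] {H K : Subgroup G} (hHK : H ≤ K)
    (hJ : thompsonJ p K ≤ H) : thompsonJ p K = thompsonJ p H :=
  congrArg sSup (maxElemAbIn_eq_of_le_of_thompsonJ_le hHK hJ)

end Thompson

/-- Let `p` be a prime, `S` a finite `p`-group and `Q ≤ S` a subgroup with
`J(S) ≰ Q`.  Then `J(N_S(J(Q))) ≰ Q`. -/
theorem thompsonJ_normalizer_not_le
    {p : ℕ} (hp : p.Prime) {S : Type*} [Group S] [Finite S] (hS : IsPGroup p S)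
    (Q : Subgroup S) (h : ¬ thompsonJ p (⊤ : Subgroup S) ≤ Q) :
    ¬ thompsonJ p (Subgroup.normalizer (thompsonJ p Q : Set S)) ≤ Q := by
  intro hJN
  set N := normalizer (thompsonJ p Q : Set S)
  have hQN : Q ≤ N := le_normalizer.trans (normalizer_le_normalizer_thompsonJ p Q)
  have hJ : thompsonJ p N = thompsonJ p Q := thompsonJ_eq_of_le_of_thompsonJ_le hQN hJN
  have hN_self : normalizer (N : Set S) = N :=
    le_antisymm ((normalizer_le_normalizer_thompsonJ p N).trans_eq (by rw [hJ])) le_normalizer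
  have : Fact p.Prime := ⟨hp⟩
  have : Group.IsNilpotent S := hS.isNilpotent
  have hN_top : N = ⊤ := normalizerCondition_iff_only_full_group_self_normalizing.mp
    Group.normalizerCondition_of_isNilpotent N hN_self
  exact h (hN_top ▸ hJN)
end

section
/- Let p be a prime, G a finite group, V an elementary abelian normal p-subgroup of G, and A ∈ 𝒜(G) a subgroup not centralizing V. Assume A is not an over-offender on V, i.e. |V : C_V(A)| ≥ |A : C_A(V)|. Then V·C_A(V) ∈ 𝒜(G); in particular, every member of 𝒜(C_G(V)) belongs to 𝒜(G) and J(C_G(V)) ≤ J(G). -/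
open Subgroup

section

variable {G : Type*} [Group G]

namespace Subgroup

theorem card_mul_relIndex_comm [Finite G] (H K : Subgroup G) :
    Nat.card H * H.relIndex K = Nat.card K * K.relIndex H := by
  refine Nat.eq_of_mul_eq_mul_right (Nat.card_pos : 0 < Nat.card ↥(H ⊓ K)) ?_
  calc Nat.card H * H.relIndex K * Nat.card ↥(H ⊓ K)
      = Nat.card H * Nat.card K := by rw [← card_inf_mul_relIndex H K]; ring
    _ = Nat.card K * K.relIndex H * Nat.card ↥(H ⊓ K) := by
      rw [← card_inf_mul_relIndex K H, inf_comm]; ring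

theorem card_sup_of_normal_left (V K : Subgroup G) [V.Normal] :
    Nat.card ↥(V ⊔ K) = Nat.card V * V.relIndex K := by
  rw [← relIndex_sup_left, ← card_inf_mul_relIndex V (V ⊔ K), inf_of_le_left le_sup_left]

end Subgroup

theorem isElementaryAbelian_iff {p : ℕ} {A : Subgroup G} :
    IsElementaryAbelian p A ↔ A ≤ centralizer A ∧ ∀ x ∈ A, x ^ p = 1 :=
  ⟨fun h => ⟨fun x hx y hy => congrArg Subtype.val (h.1 ⟨y, hy⟩ ⟨x, hx⟩),
      fun x hx => congrArg Subtype.val (h.2 ⟨x, hx⟩)⟩,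
    fun h => ⟨fun a b => Subtype.ext (h.1 b.2 a a.2), fun a => Subtype.ext (h.2 a a.2)⟩⟩

theorem IsElementaryAbelian.mono_s12 {p : ℕ} {A B : Subgroup G} (hA : IsElementaryAbelian p A)
    (hBA : B ≤ A) : IsElementaryAbelian p B := by
  rw [isElementaryAbelian_iff] at hA ⊢
  exact ⟨hBA.trans (hA.1.trans (centralizer_le hBA)), fun x hx => hA.2 x (hBA hx)⟩

theorem isElementaryAbelian_closure {p : ℕ} {s : Set G}
    (hcomm : ∀ x ∈ s, ∀ y ∈ s, x * y = y * x) (hpow : ∀ x ∈ s, x ^ p = 1) :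
    IsElementaryAbelian p (closure s) := by
  have := isMulCommutative_closure hcomm
  refine isElementaryAbelian_iff.2 ⟨le_centralizer _, fun x hx => ?_⟩
  induction hx using closure_induction with
  | mem x hx => exact hpow x hx
  | one => exact one_pow p
  | mul x y hx hy ihx ihy =>
    have hxy : Commute x y := congrArg Subtype.val (mul_comm' (⟨x, hx⟩ : closure s) ⟨y, hy⟩)
    rw [hxy.mul_pow, ihx, ihy, one_mul]
  | inv x _ ihx => rw [inv_pow, ihx, inv_one]

theorem IsElementaryAbelian.sup_s12 {p : ℕ} {H K : Subgroup G} (hH : IsElementaryAbelian p H)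
    (hK : IsElementaryAbelian p K) (hHK : H ≤ centralizer K) :
    IsElementaryAbelian p (H ⊔ K) := by
  rw [isElementaryAbelian_iff] at hH hK
  rw [sup_eq_closure]
  refine isElementaryAbelian_closure ?_ fun x hx => hx.elim (hH.2 x) (hK.2 x)
  rintro x (hx | hx) y (hy | hy)
  · exact hH.1 hy x hx
  · exact (hHK hx y hy).symm
  · exact hHK hy x hx
  · exact hK.1 hy x hx

theorem card_le_card_sup_inf_centralizer [Finite G] {V A : Subgroup G} [V.Normal]
    (hA : A ≤ centralizer A)
    (hno : (centralizer (V : Set G)).relIndex A ≤ (centralizer (A : Set G)).relIndex V) :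
    Nat.card A ≤ Nat.card ↥(V ⊔ (A ⊓ centralizer V)) := by
  set K := A ⊓ centralizer (V : Set G)
  calc Nat.card A = Nat.card K * (centralizer (V : Set G)).relIndex A := by
        rw [← card_inf_mul_relIndex, inf_comm]
    _ ≤ Nat.card K * K.relIndex V := by
        have hKA : K ≤ centralizer A := inf_le_left.trans hA
        exact Nat.mul_le_mul_left _
          (hno.trans (relIndex_le_of_le_left hKA (K.subgroupOf V).index_ne_zero_of_finite))
    _ = Nat.card ↥(V ⊔ K) := by rw [← card_mul_relIndex_comm, card_sup_of_normal_left]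

theorem mem_maxElemAbIn_top_of_card_le {p : ℕ} {A W : Subgroup G}
    (hA : A ∈ maxElemAbIn p ⊤) (hW : IsElementaryAbelian p W)
    (hcard : Nat.card A ≤ Nat.card W) :
    W ∈ maxElemAbIn p ⊤ :=
  ⟨le_top, hW, fun B _ hB => (hA.2.2 B le_top hB).trans hcard⟩

theorem maxElemAbIn_subset_top_of_mem_le {p : ℕ} {W H : Subgroup G}
    (hW : W ∈ maxElemAbIn p ⊤) (hWH : W ≤ H) : maxElemAbIn p H ⊆ maxElemAbIn p ⊤ :=
  fun _ hB => mem_maxElemAbIn_top_of_card_le hW hB.2.1 (hB.2.2 W hWH hW.2.1)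

end

theorem mul_centralizer_mem_maxElemAb_of_not_overOffender_general
    {p : ℕ} {G : Type*} [Group G] [Finite G]
    (V A : Subgroup G) (hV : V.Normal) (hVea : IsElementaryAbelian p V)
    (hA : A ∈ maxElemAbIn p (⊤ : Subgroup G))
    (hno : (Subgroup.centralizer ((V : Subgroup G) : Set G)).relIndex A ≤
      (Subgroup.centralizer ((A : Subgroup G) : Set G)).relIndex V) :
    V ⊔ (A ⊓ Subgroup.centralizer (V : Set G)) ∈ maxElemAbIn p (⊤ : Subgroup G) ∧
      (∀ B ∈ maxElemAbIn p (Subgroup.centralizer (V : Set G)),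
        B ∈ maxElemAbIn p (⊤ : Subgroup G)) ∧
      thompsonJ p (Subgroup.centralizer (V : Set G)) ≤ thompsonJ p (⊤ : Subgroup G) := by
  have hAea := hA.2.1
  have hWea : IsElementaryAbelian p (V ⊔ (A ⊓ centralizer V)) :=
    hVea.sup_s12 (hAea.mono_s12 inf_le_left) (le_centralizer_iff.1 inf_le_right)
  have hW : V ⊔ (A ⊓ centralizer V) ∈ maxElemAbIn p ⊤ :=
    mem_maxElemAbIn_top_of_card_le hA hWea
      (card_le_card_sup_inf_centralizer (isElementaryAbelian_iff.1 hAea).1 hno)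
  have hsub : maxElemAbIn p (centralizer V) ⊆ maxElemAbIn p ⊤ :=
    maxElemAbIn_subset_top_of_mem_le hW (sup_le (isElementaryAbelian_iff.1 hVea).1 inf_le_right)
  exact ⟨hW, hsub, sSup_le_sSup hsub⟩

/-- Let `V` be an elementary abelian normal `p`-subgroup of a finite group
`G`, and `A ∈ 𝒜(G)` with `[V, A] ≠ 1`.  If `A` is not an over-offender on `V`, i.e.
`|V : C_V(A)| ≥ |A : C_A(V)|`, then `V·C_A(V) ∈ 𝒜(G)`; in particular every member of
`𝒜(C_G(V))` belongs to `𝒜(G)`, and `J(C_G(V)) ≤ J(G)`. -/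
theorem mul_centralizer_mem_maxElemAb_of_not_overOffender
    {p : ℕ} (hp : p.Prime) {G : Type*} [Group G] [Finite G]
    (V A : Subgroup G) (hV : V.Normal) (hVea : IsElementaryAbelian p V)
    (hA : A ∈ maxElemAbIn p (⊤ : Subgroup G)) (hVA : ⁅V, A⁆ ≠ ⊥)
    (hno : (Subgroup.centralizer ((V : Subgroup G) : Set G)).relIndex A ≤
      (Subgroup.centralizer ((A : Subgroup G) : Set G)).relIndex V) :
    V ⊔ (A ⊓ Subgroup.centralizer (V : Set G)) ∈ maxElemAbIn p (⊤ : Subgroup G) ∧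
      (∀ B ∈ maxElemAbIn p (Subgroup.centralizer (V : Set G)),
        B ∈ maxElemAbIn p (⊤ : Subgroup G)) ∧
      thompsonJ p (Subgroup.centralizer (V : Set G)) ≤ thompsonJ p (⊤ : Subgroup G) :=
  mul_centralizer_mem_maxElemAb_of_not_overOffender_general V A hV hVea hA hno
end

section
/- Let n ≥ 1, m = 2n+1, and let G = Sym(m) act on the F_2-vector space V = {v ∈ (F_2)^m : v_1 + ⋯ + v_m = 0} by permuting coordinates (V is the natural S_m-module over F_2). Then there is no over-offender in G on V: every subgroup A ≤ G such that A/C_A(V) is a nontrivial elementary abelian 2-group satisfies |V : C_V(A)| ≥ |A : C_A(V)|. -/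
/-!
Since `m ≠ 2`, `Sym(m)` acts faithfully on `V`, so `A` is itself abelian. An abelian group
acting faithfully is determined by the images of one point from each orbit, hence
`|A| ≤ ∏ |O| ≤ 2 ^ (m - r)`, where `r` is the number of `A`-orbits on `{1, …, m}`.
On the other side, the `A`-fixed vectors of `F₂^m` are the functions constant on orbits, a
subgroup `C` of order `2 ^ r`. As `m` is odd, the all-ones vector lies in `C` but not in `V`,
so `V + C = F₂^m` and `|V : C_V(A)| = |F₂^m : C| = 2 ^ (m - r)`.
-/

/-- The natural `S_m`-module over `F₂` for odd `m`: the even-weight subspace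
`{v ∈ (F₂)^m : Σᵢ vᵢ = 0}` of the permutation module. -/
def evenWeightSub (m : ℕ) : AddSubgroup (Fin m → ZMod 2) where
  carrier := {v | ∑ i, v i = 0}
  zero_mem' := by simp
  add_mem' := by
    intro a b ha hb
    simp only [Set.mem_setOf_eq, Pi.add_apply, Finset.sum_add_distrib] at *
    rw [ha, hb, add_zero]
  neg_mem' := by
    intro a ha
    simp only [Set.mem_setOf_eq, Pi.neg_apply, Finset.sum_neg_distrib] at *
    rw [ha, neg_zero]

/-- `C_V(A)`: the fixed points in the permutation module of a subgroup `A` of permutations,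
as an additive subgroup of the function space. -/
def permFixedSub (m : ℕ) (A : Subgroup (Equiv.Perm (Fin m))) :
    AddSubgroup (Fin m → ZMod 2) where
  carrier := {v | ∀ σ ∈ A, ∀ i, v (σ i) = v i}
  zero_mem' := by intro σ _ i; rfl
  add_mem' := by
    intro a b ha hb σ hσ i
    simp only [Pi.add_apply, ha σ hσ i, hb σ hσ i]
  neg_mem' := by
    intro a ha σ hσ i
    simp only [Pi.neg_apply, ha σ hσ i]

/-- The kernel of the action of `Sym(m)` on the natural module `V`: the permutations fixing
every even-weight vector. -/
def permActKer (m : ℕ) : Subgroup (Equiv.Perm (Fin m)) where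
  carrier := {σ | ∀ v : Fin m → ZMod 2, (∑ i, v i = 0) → ∀ i, v (σ i) = v i}
  one_mem' := by intro v _ i; rfl
  mul_mem' := by
    intro a b ha hb v hv i
    rw [Equiv.Perm.mul_apply, ha v hv (b i), hb v hv i]
  inv_mem' := by
    intro a ha v hv i
    have := ha v hv (a⁻¹ i)
    rw [show a (a⁻¹ i) = i from a.apply_symm_apply i] at this
    exact this.symm

open MulAction

theorem permActKer_eq_bot {m : ℕ} (hm : m ≠ 2) : permActKer m = ⊥ := by
  rcases le_or_gt m 1 with hm1 | hm1
  · have : Subsingleton (Fin m) := Fin.subsingleton_iff_le_one.mpr hm1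
    exact Subgroup.eq_bot_of_subsingleton _
  refine (Subgroup.eq_bot_iff_forall _).mpr fun σ hσ => Equiv.ext fun i => ?_
  rw [Equiv.Perm.one_apply]
  by_contra hne
  obtain ⟨k, -, hk⟩ := Finset.exists_mem_notMem_of_card_lt_card (s := {i, σ i}) (t := .univ)
    (by rw [Finset.card_univ, Fintype.card_fin]; exact Finset.card_le_two.trans_lt (by omega))
  simp only [Finset.mem_insert, Finset.mem_singleton, not_or] at hk
  -- `e_i + e_k` is even-weight, and `σ` moves it since `σ i ∉ {i, k}`.
  have hsum : ∑ j, (Pi.single i 1 + Pi.single k 1 : Fin m → ZMod 2) j = 0 := by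
    simp only [Pi.add_apply, Finset.sum_add_distrib, Finset.sum_pi_single', Finset.mem_univ,
      if_true]
    decide
  have hv := hσ _ hsum i
  exact hne (by simpa [Pi.single_apply, hk.2, Ne.symm hk.1] using hv)

theorem Nat.le_two_pow_pred (k : ℕ) : k ≤ 2 ^ (k - 1) := by
  rcases k with _ | k
  · simp
  · exact Nat.lt_two_pow_self

theorem Finset.prod_le_two_pow_sum_pred {ι : Type*} (s : Finset ι) (f : ι → ℕ) :
    ∏ i ∈ s, f i ≤ 2 ^ ∑ i ∈ s, (f i - 1) := by
  rw [← Finset.prod_pow_eq_pow_sum]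
  exact Finset.prod_le_prod' fun i _ => Nat.le_two_pow_pred (f i)

section CommutativeFaithful

variable {G α : Type*} [Group G] [IsMulCommutative G] [MulAction G α] [FaithfulSMul G α]

variable (G α) in
theorem injective_smul_orbitRel_quotient_out :
    Function.Injective fun (g : G) (ω : orbitRel.Quotient G α) =>
      (⟨g • ω.out, orbitRel.Quotient.mem_orbit.mpr (by simp)⟩ : ω.orbit) := by
  intro g h hgh
  refine FaithfulSMul.eq_of_smul_eq_smul (α := α) fun a => ?_
  obtain ⟨k, hk⟩ : a ∈ orbit G (Quotient.mk'' a : orbitRel.Quotient G α).out :=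
    orbitRel_apply.mp (Quotient.exact' (Quotient.out_eq' _).symm)
  have hout := congrArg Subtype.val (congrFun hgh (Quotient.mk'' a))
  dsimp only at hk hout
  rw [← hk, smul_smul, smul_smul, mul_comm' g, mul_comm' h, mul_smul, mul_smul, hout]

theorem card_le_two_pow_card_sub_card_orbitRel_quotient [Finite α] :
    Nat.card G ≤ 2 ^ (Nat.card α - Nat.card (orbitRel.Quotient G α)) := by
  have := Fintype.ofFinite (orbitRel.Quotient G α)
  have hcard_orbit_pos (ω : orbitRel.Quotient G α) : 1 ≤ Nat.card ω.orbit := by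
    have := ω.nonempty_orbit.to_subtype
    exact Nat.card_pos
  calc Nat.card G ≤ Nat.card ((ω : orbitRel.Quotient G α) → ω.orbit) :=
        Nat.card_le_card_of_injective _ (injective_smul_orbitRel_quotient_out G α)
    _ = ∏ ω : orbitRel.Quotient G α, Nat.card ω.orbit := Nat.card_pi
    _ ≤ 2 ^ ∑ ω : orbitRel.Quotient G α, (Nat.card ω.orbit - 1) :=
        Finset.prod_le_two_pow_sum_pred _ _
    _ = 2 ^ (Nat.card α - Nat.card (orbitRel.Quotient G α)) := by
        rw [Finset.sum_tsub_distrib _ fun ω _ => hcard_orbit_pos ω,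
          Nat.card_congr (selfEquivSigmaOrbits' G α), Nat.card_sigma, Finset.sum_const,
          smul_eq_mul, mul_one, Finset.card_univ, Nat.card_eq_fintype_card]

end CommutativeFaithful

section FixedPoints

variable {m : ℕ} (A : Subgroup (Equiv.Perm (Fin m)))

theorem mem_permFixedSub_iff {v : Fin m → ZMod 2} :
    v ∈ permFixedSub m A ↔ orbitRel A (Fin m) ≤ Setoid.ker v := by
  refine ⟨fun hv i j hij => ?_, fun hv σ hσ i => hv (orbitRel_apply.mpr ⟨⟨σ, hσ⟩, rfl⟩)⟩
  obtain ⟨σ, rfl⟩ := orbitRel_apply.mp hij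
  exact hv σ σ.2 j

theorem card_permFixedSub :
    Nat.card (permFixedSub m A) = 2 ^ Nat.card (orbitRel.Quotient A (Fin m)) := by
  have := Fintype.ofFinite (orbitRel.Quotient A (Fin m))
  rw [Nat.card_congr ((Equiv.subtypeEquivRight fun _ => mem_permFixedSub_iff A).trans
    (Setoid.liftEquiv _)), Nat.card_fun, Nat.card_zmod]

theorem index_permFixedSub :
    (permFixedSub m A).index = 2 ^ (m - Nat.card (orbitRel.Quotient A (Fin m))) := by
  have hcard := (permFixedSub m A).card_mul_index
  have hcard_quotient : Nat.card (orbitRel.Quotient A (Fin m)) ≤ m :=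
    (Nat.card_le_card_of_surjective (Quotient.mk'' : Fin m → orbitRel.Quotient A (Fin m))
      Quotient.mk''_surjective).trans_eq (Nat.card_fin m)
  rw [card_permFixedSub, Nat.card_fun, Nat.card_zmod, Nat.card_fin] at hcard
  refine Nat.eq_of_mul_eq_mul_left (Nat.two_pow_pos (Nat.card (orbitRel.Quotient A (Fin m)))) ?_
  rw [hcard, ← pow_add, Nat.add_sub_cancel' hcard_quotient]

variable {A}

theorem evenWeightSub_sup_permFixedSub (hm : Odd m) :
    evenWeightSub m ⊔ permFixedSub m A = ⊤ := by
  refine eq_top_iff.mpr fun w _ => AddSubgroup.mem_sup.mpr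
    ⟨w + fun _ => ∑ i, w i, ?_, fun _ => ∑ i, w i, fun _ _ _ => rfl, ?_⟩
  · show ∑ i, (w i + ∑ j, w j) = 0
    rw [Finset.sum_add_distrib, Finset.sum_const, Finset.card_univ, Fintype.card_fin, nsmul_eq_mul,
      hm.natCast_zmod_two, one_mul, CharTwo.add_self_eq_zero]
  · exact funext fun i => by
      rw [Pi.add_apply, Pi.add_apply, add_assoc, CharTwo.add_self_eq_zero, add_zero]

theorem relIndex_permFixedSub_evenWeightSub (hm : Odd m) :
    (permFixedSub m A).relIndex (evenWeightSub m) = (permFixedSub m A).index := by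
  rw [← AddSubgroup.relIndex_sup_right, evenWeightSub_sup_permFixedSub hm,
    AddSubgroup.relIndex_top_right]

end FixedPoints

theorem no_overoffender_on_natural_symmetric_module_general
    (n : ℕ) (A : Subgroup (Equiv.Perm (Fin (2 * n + 1))))
    (hcomm : ∀ σ ∈ A, ∀ τ ∈ A, σ * τ * σ⁻¹ * τ⁻¹ ∈ permActKer (2 * n + 1)) :
    (permActKer (2 * n + 1)).relIndex A ≤
      (permFixedSub (2 * n + 1) A).relIndex (evenWeightSub (2 * n + 1)) := by
  have hfaithful : permActKer (2 * n + 1) = ⊥ := permActKer_eq_bot (by omega)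
  have : IsMulCommutative A := .of_comm fun σ τ => by
    have h := hcomm σ σ.2 τ τ.2
    rw [hfaithful, Subgroup.mem_bot, ← commutatorElement_def] at h
    exact Subtype.ext (commutatorElement_eq_one_iff_mul_comm.mp h)
  rw [hfaithful, Subgroup.relIndex_bot_left,
    relIndex_permFixedSub_evenWeightSub (odd_two_mul_add_one n), index_permFixedSub]
  simpa using card_le_two_pow_card_sub_card_orbitRel_quotient (G := A) (α := Fin (2 * n + 1))

/-- Let `m = 2n+1` with `n ≥ 1`, and let `G = Sym(m)` act on the natural
`S_m`-module `V = {v ∈ (F₂)^m : Σᵢ vᵢ = 0}` by permuting coordinates.  Then there is no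
over-offender in `G` on `V`: every subgroup `A ≤ G` such that `A/C_A(V)` is a nontrivial
elementary abelian `2`-group satisfies `|V : C_V(A)| ≥ |A : C_A(V)|`. -/
theorem no_overoffender_on_natural_symmetric_module
    (n : ℕ) (hn : 1 ≤ n) (A : Subgroup (Equiv.Perm (Fin (2 * n + 1))))
    (hnontriv : ¬ A ≤ permActKer (2 * n + 1))
    (hexp : ∀ σ ∈ A, σ ^ 2 ∈ permActKer (2 * n + 1))
    (hcomm : ∀ σ ∈ A, ∀ τ ∈ A, σ * τ * σ⁻¹ * τ⁻¹ ∈ permActKer (2 * n + 1)) :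
    (permActKer (2 * n + 1)).relIndex A ≤
      (permFixedSub (2 * n + 1) A).relIndex (evenWeightSub (2 * n + 1)) :=
  no_overoffender_on_natural_symmetric_module_general n A hcomm
end
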